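/- arXiv:2505.22347 — 6 statements merged into one kernel-verified Lean document; each statement's English description precedes it below -/
import Mathlib

section
/- The collection M = {M(n)}_{n≥1} with the composition maps γ is a planar operad of sets; explicitly: (a) the unit element I = (0,0) ∈ M(1) satisfies γ(I; 𝐦) = 𝐦 for all 𝐦 ∈ M(l) and γ(𝐤; I, …, I) = 𝐤 for all 𝐤 ∈ M(n); (b) the compositions are associative: for 𝐤 ∈ M(n), 𝐦_i ∈ M(l_i) (1 ≤ i ≤ n) and 𝐩^i_t ∈ M(q^i_t) (1 ≤ i ≤ n, 1 ≤ t ≤ l_i), one has γ(γ(𝐤; 𝐦_1,…,𝐦_n); 𝐩^1_1,…,𝐩^1_{l_1},…,𝐩^n_1,…,𝐩^n_{l_n}) = γ(𝐤; γ(𝐦_1; 𝐩^1_1,…,𝐩^1_{l_1}), …, γ(𝐦_n; 𝐩^n_1,…,𝐩^n_{l_n})). -/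
/-- Add `k` to the first entry of a list (the list `[k]` if the list is empty). -/
def molAddHead (k : ℕ) : List ℕ → List ℕ
  | [] => [k]
  | a :: as => (k + a) :: as

/-- The composition `γ(𝐤; 𝐦₁, …, 𝐦ₙ)` of the master operad `M`:
an element of `M(n)` is a tuple `(k₀, …, kₙ)` of naturals, encoded as a list of length `n+1`,
and the composition is
`(k₀+m¹₀, m¹₁, …, m¹_{l₁−1}, k₁+m¹_{l₁}+m²₀, m²₁, …, …, kₙ₋₁+mⁿ⁻¹_{lₙ₋₁}+mⁿ₀, mⁿ₁, …, kₙ+mⁿ_{lₙ})`. -/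
def molComp : List ℕ → List (List ℕ) → List ℕ
  | ks, [] => ks
  | [], _ :: _ => []
  | k :: ks, m :: ms =>
      molAddHead k (m.dropLast ++ molAddHead (m.getLastD 0) (molComp ks ms))

/-! Write `xs ⋆ ys` for the concatenation of tuples in which the last entry of `xs` and the first
entry of `ys` are added. It is associative, the tuple `(0)` is a unit on nonempty tuples, and
`γ(𝐤; 𝐦₁, …, 𝐦ₙ) = (k₀) ⋆ 𝐦₁ ⋆ (k₁) ⋆ ⋯ ⋆ 𝐦ₙ ⋆ (kₙ)`. Composing a product `x ⋆ y` with a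
concatenated list of inputs composes each factor with its own inputs, and associativity of `γ`
follows by induction on `n` from this and associativity of `⋆`. -/

def molGlue (xs ys : List ℕ) : List ℕ :=
  xs.dropLast ++ molAddHead (xs.getLastD 0) ys

local infixr:67 " ⋆ " => molGlue

lemma molAddHead_ne_nil (k : ℕ) (l : List ℕ) : molAddHead k l ≠ [] := by
  cases l <;> simp [molAddHead]

lemma length_molAddHead (k : ℕ) {l : List ℕ} (hl : l ≠ []) :
    (molAddHead k l).length = l.length := by
  cases l with
  | nil => contradiction
  | cons => rfl

lemma molAddHead_molAddHead (a b : ℕ) (l : List ℕ) :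
    molAddHead a (molAddHead b l) = molAddHead (a + b) l := by
  cases l <;> simp [molAddHead, add_assoc]

lemma singleton_molGlue (k : ℕ) (ys : List ℕ) : [k] ⋆ ys = molAddHead k ys := rfl

lemma nil_molGlue (ys : List ℕ) : [] ⋆ ys = molAddHead 0 ys := rfl

lemma cons_molGlue (x : ℕ) {xs : List ℕ} (hxs : xs ≠ []) (ys : List ℕ) :
    (x :: xs) ⋆ ys = x :: xs ⋆ ys := by
  obtain ⟨y, xs, rfl⟩ := List.exists_cons_of_ne_nil hxs
  simp [molGlue, List.dropLast_cons_cons]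

lemma molGlue_ne_nil (xs ys : List ℕ) : xs ⋆ ys ≠ [] := by
  simp [molGlue, molAddHead_ne_nil]

lemma molAddHead_molGlue (a : ℕ) (xs ys : List ℕ) :
    molAddHead a (xs ⋆ ys) = molAddHead a xs ⋆ ys := by
  match xs with
  | [] => rw [nil_molGlue, molAddHead_molAddHead, add_zero]; rfl
  | [x] => rw [singleton_molGlue, molAddHead_molAddHead]; rfl
  | x :: y :: xs => simp [cons_molGlue, molAddHead]

lemma molGlue_assoc (xs ys zs : List ℕ) : (xs ⋆ ys) ⋆ zs = xs ⋆ ys ⋆ zs := by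
  match xs with
  | [] => simp only [nil_molGlue, molAddHead_molGlue]
  | [x] => simp only [singleton_molGlue, molAddHead_molGlue]
  | x :: y :: xs =>
    rw [cons_molGlue x (List.cons_ne_nil y xs), cons_molGlue x (molGlue_ne_nil _ _),
      cons_molGlue x (List.cons_ne_nil y xs), molGlue_assoc (y :: xs)]

lemma molGlue_zero {xs : List ℕ} (hxs : xs ≠ []) : xs ⋆ [0] = xs := by
  simpa [molGlue, molAddHead, List.getLastD_eq_getLast?, List.getLast?_eq_some_getLast hxs] using
    List.dropLast_append_getLast hxs

lemma zero_molGlue {ys : List ℕ} (hys : ys ≠ []) : [0] ⋆ ys = ys := by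
  cases ys with
  | nil => contradiction
  | cons => simp [singleton_molGlue, molAddHead]

lemma molComp_cons_cons (k : ℕ) (ks m : List ℕ) (ms : List (List ℕ)) :
    molComp (k :: ks) (m :: ms) = [k] ⋆ m ⋆ molComp ks ms := rfl

@[simp]
lemma molComp_nil (k : List ℕ) : molComp k [] = k := by
  cases k <;> rfl

lemma molComp_ne_nil {k : List ℕ} (hk : k ≠ []) (ms : List (List ℕ)) : molComp k ms ≠ [] := by
  match k, ms with
  | k, [] => rwa [molComp_nil]
  | k :: ks, m :: ms => rw [molComp_cons_cons]; exact molGlue_ne_nil _ _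

lemma molComp_molAddHead (a : ℕ) {t : List ℕ} (ht : t ≠ []) (ps : List (List ℕ)) :
    molComp (molAddHead a t) ps = molAddHead a (molComp t ps) := by
  match t, ps with
  | t, [] => simp only [molComp_nil]
  | c :: cs, p :: ps =>
    show molComp ((a + c) :: cs) (p :: ps) = molAddHead a (molComp (c :: cs) (p :: ps))
    rw [molComp_cons_cons, molComp_cons_cons, singleton_molGlue, singleton_molGlue,
      molAddHead_molAddHead]

lemma molComp_molGlue {x : List ℕ} {ps : List (List ℕ)} (hx : x.length = ps.length + 1)
    {y : List ℕ} (hy : y ≠ []) (qs : List (List ℕ)) :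
    molComp (x ⋆ y) (ps ++ qs) = molComp x ps ⋆ molComp y qs := by
  induction ps generalizing x with
  | nil =>
    obtain ⟨a, rfl⟩ := List.length_eq_one_iff.mp hx
    exact molComp_molAddHead a hy qs
  | cons p ps ih =>
    obtain ⟨a, x, rfl⟩ := List.exists_cons_of_ne_nil (List.ne_nil_of_length_eq_add_one hx)
    have hx' : x.length = ps.length + 1 := by simpa using hx
    have hne : x ≠ [] := List.ne_nil_of_length_eq_add_one hx'
    rw [cons_molGlue a hne, List.cons_append, molComp_cons_cons, ih hx', molComp_cons_cons,
      molGlue_assoc, molGlue_assoc]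

lemma molComp_replicate_unit {n : ℕ} {k : List ℕ} (hk : k.length = n + 1) :
    molComp k (List.replicate n [0, 0]) = k := by
  induction n generalizing k with
  | zero => exact molComp_nil k
  | succ n ih =>
    obtain ⟨a, ks, rfl⟩ := List.exists_cons_of_ne_nil (List.ne_nil_of_length_eq_add_one hk)
    have hks : ks.length = n + 1 := by simpa using hk
    rw [List.replicate_succ, molComp_cons_cons, ih hks,
      cons_molGlue 0 (List.cons_ne_nil 0 []), zero_molGlue (List.ne_nil_of_length_eq_add_one hks)]
    simp [singleton_molGlue, molAddHead]

lemma molComp_molComp {ms : List (List ℕ)} {ps : List (List (List ℕ))}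
    (hlen : List.Forall₂ (fun m pl => pl.length + 1 = m.length) ms ps)
    {k : List ℕ} (hk : k.length = ms.length + 1) :
    molComp (molComp k ms) ps.flatten = molComp k (List.zipWith molComp ms ps) := by
  induction hlen generalizing k with
  | nil => simp
  | @cons m pl ms ps hm _ ih =>
    obtain ⟨a, ks, rfl⟩ := List.exists_cons_of_ne_nil (List.ne_nil_of_length_eq_add_one hk)
    have hks : ks.length = ms.length + 1 := by simpa using hk
    have ham : ([a] ⋆ m).length = pl.length + 1 := by
      rw [singleton_molGlue, length_molAddHead a (List.ne_nil_of_length_eq_add_one hm.symm), hm]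
    rw [molComp_cons_cons, ← molGlue_assoc, List.flatten_cons,
      molComp_molGlue ham (molComp_ne_nil (List.ne_nil_of_length_eq_add_one hks) ms), ih hks,
      singleton_molGlue, molComp_molAddHead a (List.ne_nil_of_length_eq_add_one hm.symm),
      ← singleton_molGlue, molGlue_assoc, List.zipWith_cons_cons, molComp_cons_cons]

/-- The collection `M = {M(n)}_{n≥1}`, `M(n) = ℕ^{n+1}`, with the composition maps `γ`
is a planar operad of sets: the tuple `I = (0,0) ∈ M(1)` is a unit and `γ` is associative. -/
theorem master_operad_is_planar_operad :
    -- (a) unit: γ(I; 𝐦) = 𝐦 for all 𝐦 ∈ M(l)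
    (∀ (l : ℕ) (m : List ℕ), 1 ≤ l → m.length = l + 1 →
      molComp [0, 0] [m] = m) ∧
    -- (a) unit: γ(𝐤; I, …, I) = 𝐤 for all 𝐤 ∈ M(n)
    (∀ (n : ℕ) (k : List ℕ), 1 ≤ n → k.length = n + 1 →
      molComp k (List.replicate n [0, 0]) = k) ∧
    -- (b) associativity
    (∀ (n : ℕ) (k : List ℕ) (ms : List (List ℕ)) (ps : List (List (List ℕ))),
      1 ≤ n → k.length = n + 1 → ms.length = n → ps.length = n →
      (∀ m ∈ ms, 2 ≤ m.length) →
      (∀ pl ∈ ps, ∀ p ∈ pl, 2 ≤ p.length) →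
      List.Forall₂ (fun (m : List ℕ) (pl : List (List ℕ)) => pl.length + 1 = m.length) ms ps →
      molComp (molComp k ms) ps.flatten =
        molComp k (List.zipWith (fun m pl => molComp m pl) ms ps)) := by
  refine ⟨fun l m _ hm => ?_, fun n k _ hk => molComp_replicate_unit hk,
    fun n k ms ps _ hk hms _ _ _ hlen => molComp_molComp hlen (hms ▸ hk)⟩
  have hne : m ≠ [] := List.ne_nil_of_length_eq_add_one hm
  rw [molComp_cons_cons, molComp, molGlue_zero hne, zero_molGlue hne]
end

section
/- The operad composition on symmetric groups is compatible with the weak Bruhat order: if τ, τ′ ∈ S(k) with τ ≼ τ′ (i.e. Inv(τ) ⊆ Inv(τ′)) and σ_i, σ′_i ∈ S(n_i) with σ_i ≼ σ′_i for i = 1, …, k, then γ(τ; σ_1,…,σ_k) ≼ γ(τ′; σ′_1,…,σ′_k), i.e. Inv(γ(τ; σ_1,…,σ_k)) ⊆ Inv(γ(τ′; σ′_1,…,σ′_k)). -/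
/-- `psum n i = n 1 + ⋯ + n i`. -/
def psum (n : ℕ → ℕ) (i : ℕ) : ℕ := ∑ t ∈ Finset.Icc 1 i, n t

/-- `f` is a permutation of `[N] = {1, …, N}` (its values outside `[N]` are irrelevant). -/
def IsPermOn (N : ℕ) (f : ℕ → ℕ) : Prop := Set.BijOn f (Set.Icc 1 N) (Set.Icc 1 N)

/-- The inversion set of a permutation `f` of `[N]`:
`Inv(f) = {(i,j) : 1 ≤ i < j ≤ N, f(i) > f(j)}`. -/
def InvSet (N : ℕ) (f : ℕ → ℕ) : Set (ℕ × ℕ) :=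
  {p | 1 ≤ p.1 ∧ p.1 < p.2 ∧ p.2 ≤ N ∧ f p.2 < f p.1}

/-- `g` is the block composition `γ(τ; σ₁, …, σ_k)` of `τ ∈ S(k)` with `σ_i ∈ S(n i)`:
for `1 ≤ i ≤ k` and `1 ≤ r ≤ n i`,
`γ(τ; σ₁,…,σ_k)(n₁+⋯+n_{i−1}+r) = (Σ_{t ∈ [k], τ(t) < τ(i)} n_t) + σ_i(r)`. -/
def IsBlockComp (k : ℕ) (n : ℕ → ℕ) (τ : ℕ → ℕ) (σ : ℕ → ℕ → ℕ) (g : ℕ → ℕ) : Prop :=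
  ∀ i r, 1 ≤ i → i ≤ k → 1 ≤ r → r ≤ n i →
    g (psum n (i - 1) + r) =
      (∑ t ∈ (Finset.Icc 1 k).filter (fun t => τ t < τ i), n t) + σ i r

lemma psum_succ (n : ℕ → ℕ) (m : ℕ) :
    psum n (m + 1) = psum n m + n (m + 1) := by
  simp [psum, Finset.sum_Icc_succ_top (Nat.le_add_left 1 m)]

lemma psum_mono (n : ℕ → ℕ) : Monotone (psum n) := fun _ _ h =>
  Finset.sum_le_sum_of_subset (Finset.Icc_subset_Icc_right h)

lemma psum_decomp (k : ℕ) (n : ℕ → ℕ) (p : ℕ) (hp1 : 1 ≤ p) (hpk : p ≤ psum n k) :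
    ∃ i r, 1 ≤ i ∧ i ≤ k ∧ 1 ≤ r ∧ r ≤ n i ∧ p = psum n (i - 1) + r := by
  induction k with
  | zero => simp [psum] at hpk; omega
  | succ m ih =>
    by_cases h : p ≤ psum n m
    · obtain ⟨i, r, h1, h2, h3, h4, h5⟩ := ih h
      exact ⟨i, r, h1, by omega, h3, h4, h5⟩
    · have hs := psum_succ n m
      refine ⟨m + 1, p - psum n m, by omega, le_refl _, by omega, by omega, ?_⟩
      simp only [Nat.add_sub_cancel]
      omega

lemma bsum_le (k : ℕ) (n τ : ℕ → ℕ) (i j : ℕ) (hi : 1 ≤ i) (hik : i ≤ k)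
    (h : τ i < τ j) :
    (∑ t ∈ (Finset.Icc 1 k).filter (fun t => τ t < τ i), n t) + n i ≤
      ∑ t ∈ (Finset.Icc 1 k).filter (fun t => τ t < τ j), n t := by
  have hni : i ∉ (Finset.Icc 1 k).filter (fun t => τ t < τ i) := by simp
  have hsub : insert i ((Finset.Icc 1 k).filter (fun t => τ t < τ i)) ⊆
      (Finset.Icc 1 k).filter (fun t => τ t < τ j) := by
    intro t ht
    simp only [Finset.mem_insert, Finset.mem_filter, Finset.mem_Icc] at *
    rcases ht with rfl | ⟨⟨h1, h2⟩, h3⟩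
    · exact ⟨⟨hi, hik⟩, h⟩
    · exact ⟨⟨h1, h2⟩, h3.trans h⟩
  have h2 := Finset.sum_le_sum_of_subset (f := n) hsub
  rw [Finset.sum_insert hni] at h2
  omega

/-- The operad composition on symmetric groups is compatible with the weak Bruhat order:
if `Inv(τ) ⊆ Inv(τ′)` and `Inv(σᵢ) ⊆ Inv(σ′ᵢ)` for all `i`, then
`Inv(γ(τ; σ₁,…,σ_k)) ⊆ Inv(γ(τ′; σ′₁,…,σ′_k))`. -/
theorem block_composition_monotone_weak_bruhat
    (k : ℕ) (n : ℕ → ℕ) (τ τ' : ℕ → ℕ) (σ σ' : ℕ → ℕ → ℕ) (g g' : ℕ → ℕ)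
    (hk : 1 ≤ k) (hτ : IsPermOn k τ) (hτ' : IsPermOn k τ')
    (hσ : ∀ i, 1 ≤ i → i ≤ k → 1 ≤ n i ∧ IsPermOn (n i) (σ i))
    (hσ' : ∀ i, 1 ≤ i → i ≤ k → IsPermOn (n i) (σ' i))
    (hg : IsBlockComp k n τ σ g) (hg' : IsBlockComp k n τ' σ' g')
    (hττ' : InvSet k τ ⊆ InvSet k τ')
    (hσσ' : ∀ i, 1 ≤ i → i ≤ k → InvSet (n i) (σ i) ⊆ InvSet (n i) (σ' i)) :
    InvSet (psum n k) g ⊆ InvSet (psum n k) g' := by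
  rintro ⟨p, q⟩ ⟨hp1, hpq, hqk, hval⟩
  obtain ⟨i, r, hi1, hik, hr1, hrn, hpe⟩ := psum_decomp k n p hp1 (le_trans hpq.le hqk)
  obtain ⟨j, s, hj1, hjk, hs1, hsn, hqe⟩ := psum_decomp k n q (by omega) hqk
  subst hpe; subst hqe
  simp only [InvSet, Set.mem_setOf_eq] at *
  have hσi := (hσ i hi1 hik).2
  have hσj := (hσ j hj1 hjk).2
  have hbr : σ i r ∈ Set.Icc 1 (n i) := hσi.1 ⟨hr1, hrn⟩
  have hbs : σ j s ∈ Set.Icc 1 (n j) := hσj.1 ⟨hs1, hsn⟩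
  have hbr' : σ' i r ∈ Set.Icc 1 (n i) := (hσ' i hi1 hik).1 ⟨hr1, hrn⟩
  have hbs' : σ' j s ∈ Set.Icc 1 (n j) := (hσ' j hj1 hjk).1 ⟨hs1, hsn⟩
  simp only [Set.mem_Icc] at hbr hbs hbr' hbs'
  have hgp := hg i r hi1 hik hr1 hrn
  have hgq := hg j s hj1 hjk hs1 hsn
  have hg'p := hg' i r hi1 hik hr1 hrn
  have hg'q := hg' j s hj1 hjk hs1 hsn
  have hij : i ≤ j := by
    by_contra h
    push_neg at h
    have h1 : psum n j ≤ psum n (i - 1) := psum_mono n (by omega)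
    have h2 := psum_succ n (j - 1)
    rw [show j - 1 + 1 = j by omega] at h2
    omega
  refine ⟨hp1, hpq, hqk, ?_⟩
  rcases eq_or_lt_of_le hij with rfl | hlt
  · -- same block
    have hrs : r < s := by omega
    have hinv : σ i s < σ i r := by omega
    have h5 : σ' i s < σ' i r :=
      (hσσ' i hi1 hik (⟨hr1, hrs, hsn, hinv⟩ : (r, s) ∈ InvSet (n i) (σ i))).2.2.2
    omega
  · -- different blocks
    have hne : τ i ≠ τ j := fun h =>
      absurd (hτ.2.1 (⟨hi1, hik⟩ : i ∈ Set.Icc 1 k) (⟨hj1, hjk⟩ : j ∈ Set.Icc 1 k) h)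
        (by omega)
    have hji : τ j < τ i := by
      rcases lt_or_gt_of_ne hne with h | h
      · exfalso
        have := bsum_le k n τ i j hi1 hik h
        omega
      · exact h
    have hτ'ji : τ' j < τ' i :=
      (hττ' (⟨hi1, hlt, hjk, hji⟩ : (i, j) ∈ InvSet k τ)).2.2.2
    have := bsum_le k n τ' j i hj1 hjk hτ'ji
    omega
end

section
/- (Ziegler) Let 1 ≤ d ≤ n. A set I of (d+1)-element subsets of [n] is the inversion set Inv(≺) of some admissible linear order ≺ on the d-element subsets of [n] if and only if I is consistent, i.e. for every (d+2)-element subset 𝐢 of [n] the intersection I ∩ P(𝐢) is a beginning or an ending interval of the packet P(𝐢). -/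
/-!
Inversion sets are consistent: for `x < y < z` in a `(d+2)`-set `W`, the `d`-sets
`W ∖ {x, y}`, `W ∖ {x, z}`, `W ∖ {y, z}` are compared pairwise inside the packets of `W ∖ x`,
`W ∖ z`, `W ∖ y`, and transitivity of `≺` forbids the membership patterns `101` and `010` of
`(W ∖ x, W ∖ y, W ∖ z)` in `Inv(≺)`; on the positions of a packet this says exactly that
`I ∩ P(W)` is a beginning or an ending interval.

Conversely, a consistent `I` orients every packet (antilexicographically iff it lies in `I`),
and it suffices to show that the resulting digraph on `d`-sets is acyclic: a linear extension
is then admissible with inversion set `I`. Acyclicity is proved by induction on `n`. The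
potential that is `1` on sets containing `n` and `2` or `0` on sets `A` avoiding `n`, according
as `A ∪ {n} ∈ I` or not, never decreases along an edge, and an edge along which it is constant
joins two sets containing `n` (an edge for the contraction `{T | T ∪ {n} ∈ I}` on `[n - 1]`)
or two sets avoiding `n` (an edge for `I` itself on `[n - 1]`); both are consistent.
-/

/-- `hat s t` is `𝐬̂_t`: the finset `s` with its `t`-th smallest element removed (`t` is
1-indexed); for `s = {i_1 < ⋯ < i_c}`, `hat s t = s \ {i_t}`. -/
def hat (s : Finset ℕ) (t : ℕ) : Finset ℕ :=
  s.erase ((s.sort (· ≤ ·)).getD (t - 1) 0)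

/-- Ziegler's consistency condition for a set `I` of `(d+1)`-element subsets of `[N]`:
for every `(d+2)`-element subset `s ⊆ [N]`, the intersection `I ∩ P(s)` with the packet
`P(s) = (ŝ_{d+2}, …, ŝ_1)` is a beginning interval `{ŝ_{d+2}, …, ŝ_k}` or an ending
interval `{ŝ_k, …, ŝ_1}` of `P(s)`. -/
def IsConsistent (N d : ℕ) (I : Set (Finset ℕ)) : Prop :=
  ∀ s : Finset ℕ, s ⊆ Finset.Icc 1 N → s.card = d + 2 →
    ∃ k ≤ d + 2,
      (∀ t, 1 ≤ t → t ≤ d + 2 → (hat s t ∈ I ↔ t ≤ k)) ∨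
      (∀ t, 1 ≤ t → t ≤ d + 2 → (hat s t ∈ I ↔ k ≤ t))

/-- `r` is a (strict) linear order on the set `A`. -/
def IsLinOrderOn (A : Set (Finset ℕ)) (r : Finset ℕ → Finset ℕ → Prop) : Prop :=
  (∀ a ∈ A, ¬ r a a) ∧
  (∀ a ∈ A, ∀ b ∈ A, ∀ c ∈ A, r a b → r b c → r a c) ∧
  (∀ a ∈ A, ∀ b ∈ A, a ≠ b → r a b ∨ r b a)

/-- The packet of the `(d+1)`-subset `s` is ordered lexicographically by `r`:
`ŝ_{d+1} ≺ ŝ_d ≺ ⋯ ≺ ŝ_1`. -/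
def PacketLex (d : ℕ) (r : Finset ℕ → Finset ℕ → Prop) (s : Finset ℕ) : Prop :=
  ∀ t t' : ℕ, 1 ≤ t → t < t' → t' ≤ d + 1 → r (hat s t') (hat s t)

/-- The packet of the `(d+1)`-subset `s` is ordered antilexicographically by `r`:
`ŝ_{d+1} ≻ ŝ_d ≻ ⋯ ≻ ŝ_1`. -/
def PacketAntilex (d : ℕ) (r : Finset ℕ → Finset ℕ → Prop) (s : Finset ℕ) : Prop :=
  ∀ t t' : ℕ, 1 ≤ t → t < t' → t' ≤ d + 1 → r (hat s t) (hat s t')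

/-- `r` is an admissible linear order on the `d`-element subsets of `[n]`: a linear order
whose restriction to every packet `P(𝐢)`, `𝐢` a `(d+1)`-subset of `[n]`, is
lexicographic or antilexicographic. -/
def IsAdmissible (n d : ℕ) (r : Finset ℕ → Finset ℕ → Prop) : Prop :=
  IsLinOrderOn {s | s ⊆ Finset.Icc 1 n ∧ s.card = d} r ∧
  ∀ s : Finset ℕ, s ⊆ Finset.Icc 1 n → s.card = d + 1 →
    PacketLex d r s ∨ PacketAntilex d r s

/-- The inversion set of an admissible order `r`: the set of `(d+1)`-subsets of `[n]`
whose packet is ordered antilexicographically. -/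
def invOrder (n d : ℕ) (r : Finset ℕ → Finset ℕ → Prop) : Set (Finset ℕ) :=
  {s | s ⊆ Finset.Icc 1 n ∧ s.card = d + 1 ∧ PacketAntilex d r s}

def nthSmallest (s : Finset ℕ) (t : ℕ) : ℕ := (s.sort (· ≤ ·)).getD (t - 1) 0

lemma nthSmallest_eq_getElem {s : Finset ℕ} {t : ℕ} (h1 : 1 ≤ t) (h2 : t ≤ s.card) :
    nthSmallest s t = (s.sort (· ≤ ·))[t - 1]'(by rw [Finset.length_sort]; omega) :=
  List.getD_eq_getElem _ _ _

lemma nthSmallest_mem {s : Finset ℕ} {t : ℕ} (h1 : 1 ≤ t) (h2 : t ≤ s.card) :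
    nthSmallest s t ∈ s := by
  rw [nthSmallest_eq_getElem h1 h2, ← Finset.mem_sort (· ≤ ·)]
  exact List.getElem_mem _

lemma strictMonoOn_nthSmallest (s : Finset ℕ) :
    StrictMonoOn (nthSmallest s) (Set.Icc 1 s.card) := by
  rintro t ⟨ht1, ht2⟩ t' ⟨ht1', ht2'⟩ htt'
  rw [nthSmallest_eq_getElem ht1 ht2, nthSmallest_eq_getElem ht1' ht2']
  exact (Finset.sortedLT_sort s).strictMono_get (show (⟨t - 1, _⟩ : Fin _) < ⟨t' - 1, _⟩ by
    simp only [Fin.mk_lt_mk]; omega)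

lemma exists_nthSmallest_eq {s : Finset ℕ} {x : ℕ} (hx : x ∈ s) :
    ∃ t ∈ Set.Icc 1 s.card, nthSmallest s t = x := by
  obtain ⟨i, hi, rfl⟩ := List.mem_iff_getElem.1 ((Finset.mem_sort (· ≤ ·)).2 hx)
  rw [Finset.length_sort] at hi
  exact ⟨i + 1, ⟨by omega, by omega⟩, nthSmallest_eq_getElem (by omega) (by omega)⟩

lemma forall_hat_lt_iff (s : Finset ℕ) (P : Finset ℕ → Finset ℕ → Prop) :
    (∀ t t', 1 ≤ t → t < t' → t' ≤ s.card → P (hat s t) (hat s t')) ↔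
      ∀ x ∈ s, ∀ y ∈ s, x < y → P (s.erase x) (s.erase y) := by
  have hmono := strictMonoOn_nthSmallest s
  constructor
  · intro h x hx y hy hxy
    obtain ⟨t, ht, rfl⟩ := exists_nthSmallest_eq hx
    obtain ⟨t', ht', rfl⟩ := exists_nthSmallest_eq hy
    exact h t t' ht.1 ((hmono.lt_iff_lt ht ht').1 hxy) ht'.2
  · intro h t t' ht htt' ht'
    exact h _ (nthSmallest_mem ht (by omega)) _ (nthSmallest_mem (by omega) ht')
      (hmono ⟨ht, by omega⟩ ⟨by omega, ht'⟩ htt')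

lemma forall_hat_lt_lt_iff (s : Finset ℕ) (P : Finset ℕ → Finset ℕ → Finset ℕ → Prop) :
    (∀ t₁ t₂ t₃, 1 ≤ t₁ → t₁ < t₂ → t₂ < t₃ → t₃ ≤ s.card →
        P (hat s t₁) (hat s t₂) (hat s t₃)) ↔
      ∀ x ∈ s, ∀ y ∈ s, ∀ z ∈ s, x < y → y < z → P (s.erase x) (s.erase y) (s.erase z) := by
  have hmono := strictMonoOn_nthSmallest s
  constructor
  · intro h x hx y hy z hz hxy hyz
    obtain ⟨t₁, ht₁, rfl⟩ := exists_nthSmallest_eq hx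
    obtain ⟨t₂, ht₂, rfl⟩ := exists_nthSmallest_eq hy
    obtain ⟨t₃, ht₃, rfl⟩ := exists_nthSmallest_eq hz
    exact h t₁ t₂ t₃ ht₁.1 ((hmono.lt_iff_lt ht₁ ht₂).1 hxy) ((hmono.lt_iff_lt ht₂ ht₃).1 hyz) ht₃.2
  · intro h t₁ t₂ t₃ ht₁ h₁₂ h₂₃ ht₃
    exact h _ (nthSmallest_mem ht₁ (by omega)) _ (nthSmallest_mem (by omega) (by omega))
      _ (nthSmallest_mem (by omega) ht₃)
      (hmono ⟨ht₁, by omega⟩ ⟨by omega, by omega⟩ h₁₂)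
      (hmono ⟨by omega, by omega⟩ ⟨by omega, ht₃⟩ h₂₃)

lemma exists_initial_or_final_iff (m : ℕ) (f : ℕ → Prop) :
    (∃ k ≤ m, (∀ t, 1 ≤ t → t ≤ m → (f t ↔ t ≤ k)) ∨ (∀ t, 1 ≤ t → t ≤ m → (f t ↔ k ≤ t))) ↔
      ∀ t₁ t₂ t₃, 1 ≤ t₁ → t₁ < t₂ → t₂ < t₃ → t₃ ≤ m →
        (f t₁ → f t₃ → f t₂) ∧ (¬ f t₁ → ¬ f t₃ → ¬ f t₂) := by
  classical
  constructor
  · rintro ⟨k, -, h | h⟩ t₁ t₂ t₃ h₁ h₁₂ h₂₃ h₃ <;>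
      rw [h t₁ h₁ (by omega), h t₂ (by omega) (by omega), h t₃ (by omega) h₃] <;> omega
  intro h
  by_cases hnone : ∀ t, 1 ≤ t → t ≤ m → ¬ f t
  · exact ⟨0, Nat.zero_le m, Or.inl fun t h₁ h₂ => iff_of_false (hnone t h₁ h₂) (by omega)⟩
  push Not at hnone
  obtain ⟨t₀, ht₀, ht₀m, hft₀⟩ := hnone
  by_cases hf₁ : f 1
  · refine ⟨Nat.findGreatest f m, Nat.findGreatest_le m, Or.inl fun t h₁ h₂ => ⟨?_, ?_⟩⟩
    · exact Nat.le_findGreatest h₂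
    · intro htk
      have hk : f (Nat.findGreatest f m) := Nat.findGreatest_spec ht₀m hft₀
      rcases (show t = 1 ∨ t = Nat.findGreatest f m ∨ 1 < t ∧ t < Nat.findGreatest f m by omega)
        with rfl | rfl | ⟨h₁t, htk⟩
      exacts [hf₁, hk, (h 1 t _ le_rfl h₁t htk (Nat.findGreatest_le m)).1 hf₁ hk]
  · have hfm : f m := by
      by_contra hfm
      rcases (show t₀ = 1 ∨ t₀ = m ∨ 1 < t₀ ∧ t₀ < m by omega) with rfl | rfl | ⟨h₁, h₂⟩
      exacts [hf₁ hft₀, hfm hft₀, (h 1 t₀ m le_rfl h₁ h₂ le_rfl).2 hf₁ hfm hft₀]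
    have hex : ∃ t, 1 ≤ t ∧ f t := ⟨t₀, ht₀, hft₀⟩
    have hk := Nat.find_spec hex
    refine ⟨Nat.find hex, (Nat.find_min' hex ⟨ht₀, hft₀⟩).trans ht₀m,
      Or.inr fun t h₁ h₂ => ⟨fun hft => Nat.find_min' hex ⟨h₁, hft⟩, fun hkt => ?_⟩⟩
    rcases (show t = Nat.find hex ∨ t = m ∨ Nat.find hex < t ∧ t < m by omega)
      with rfl | rfl | ⟨hkt, htm⟩
    exacts [hk.2, hfm, (h _ t m hk.1 hkt htm le_rfl).1 hk.2 hfm]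

lemma isConsistent_iff {N d : ℕ} {U : Set (Finset ℕ)} :
    IsConsistent N d U ↔ ∀ W ⊆ Finset.Icc 1 N, W.card = d + 2 →
      ∀ x ∈ W, ∀ y ∈ W, ∀ z ∈ W, x < y → y < z →
        (W.erase x ∈ U → W.erase z ∈ U → W.erase y ∈ U) ∧
        (W.erase x ∉ U → W.erase z ∉ U → W.erase y ∉ U) := by
  refine forall₃_congr fun W _ hW => ?_
  rw [← hW, exists_initial_or_final_iff, ← forall_hat_lt_lt_iff W
    (fun X Y Z => (X ∈ U → Z ∈ U → Y ∈ U) ∧ (X ∉ U → Z ∉ U → Y ∉ U))]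

lemma packetAntilex_iff {d : ℕ} {r : Finset ℕ → Finset ℕ → Prop} {s : Finset ℕ}
    (hs : s.card = d + 1) :
    PacketAntilex d r s ↔ ∀ x ∈ s, ∀ y ∈ s, x < y → r (s.erase x) (s.erase y) := by
  rw [PacketAntilex, ← hs, ← forall_hat_lt_iff s r]

lemma packetLex_iff {d : ℕ} {r : Finset ℕ → Finset ℕ → Prop} {s : Finset ℕ}
    (hs : s.card = d + 1) :
    PacketLex d r s ↔ ∀ x ∈ s, ∀ y ∈ s, x < y → r (s.erase y) (s.erase x) := by
  rw [PacketLex, ← hs]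
  exact forall_hat_lt_iff s (flip r)

namespace IsLinOrderOn

variable {A : Set (Finset ℕ)} {r : Finset ℕ → Finset ℕ → Prop} {a b c : Finset ℕ}

lemma asymm (h : IsLinOrderOn A r) (ha : a ∈ A) (hb : b ∈ A) (hab : r a b) : ¬ r b a :=
  fun hba => h.1 a ha (h.2.1 a ha b hb a ha hab hba)

lemma not_rel_trans (h : IsLinOrderOn A r) (ha : a ∈ A) (hb : b ∈ A) (hc : c ∈ A)
    (hab : ¬ r a b) (hbc : ¬ r b c) : ¬ r a c := by
  intro hac
  obtain rfl | hba := (em (a = b)).imp_right fun hne => (h.2.2 a ha b hb hne).resolve_left hab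
  · exact hbc hac
  · exact hbc (h.2.1 b hb a ha c hc hba hac)

end IsLinOrderOn

namespace IsAdmissible

variable {n d : ℕ} {r : Finset ℕ → Finset ℕ → Prop}

lemma rel_erase_iff (h : IsAdmissible n d r) {K : Finset ℕ} (hK : K ⊆ Finset.Icc 1 n)
    (hc : K.card = d + 1) {x y : ℕ} (hx : x ∈ K) (hy : y ∈ K) (hxy : x < y) :
    r (K.erase x) (K.erase y) ↔ K ∈ invOrder n d r := by
  have hdom : ∀ z ∈ K, K.erase z ∈ {s | s ⊆ Finset.Icc 1 n ∧ s.card = d} := fun z hz =>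
    ⟨(K.erase_subset z).trans hK, by rw [Finset.card_erase_of_mem hz, hc, Nat.add_sub_cancel]⟩
  have hinv : K ∈ invOrder n d r ↔ PacketAntilex d r K := by simp [invOrder, hK, hc]
  rw [hinv]
  refine ⟨fun hr => (h.2 K hK hc).resolve_left fun hlex => ?_,
    fun hanti => (packetAntilex_iff hc).1 hanti x hx y hy hxy⟩
  exact h.1.asymm (hdom x hx) (hdom y hy) hr ((packetLex_iff hc).1 hlex x hx y hy hxy)

theorem isConsistent_invOrder (h : IsAdmissible n d r) : IsConsistent n d (invOrder n d r) := by
  refine isConsistent_iff.2 fun W hW hcard x hx y hy z hz hxy hyz => ?_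
  have hWerase : ∀ u ∈ W, W.erase u ⊆ Finset.Icc 1 n ∧ (W.erase u).card = d + 1 := fun u hu =>
    ⟨(W.erase_subset u).trans hW, by rw [Finset.card_erase_of_mem hu, hcard]; rfl⟩
  have hdom : ∀ u ∈ W, ∀ v ∈ W, u ≠ v →
      (W.erase u).erase v ∈ {s | s ⊆ Finset.Icc 1 n ∧ s.card = d} := fun u hu v hv huv =>
    ⟨((W.erase u).erase_subset v).trans (hWerase u hu).1,
      by rw [Finset.card_erase_of_mem (Finset.mem_erase.2 ⟨huv.symm, hv⟩), (hWerase u hu).2]; rfl⟩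
  have hrel : ∀ u ∈ W, ∀ v ∈ W, ∀ w ∈ W, u ≠ v → u ≠ w → v < w →
      (r ((W.erase u).erase v) ((W.erase u).erase w) ↔ W.erase u ∈ invOrder n d r) :=
    fun u hu v hv w hw huv huw hvw => h.rel_erase_iff (hWerase u hu).1 (hWerase u hu).2
      (Finset.mem_erase.2 ⟨huv.symm, hv⟩) (Finset.mem_erase.2 ⟨huw.symm, hw⟩) hvw
  -- `a = W \ {x, y}`, `b = W \ {x, z}`, `c = W \ {y, z}`: the pairs `(a, b)`, `(b, c)`, `(a, c)`
  -- lie in the packets of `W \ x`, `W \ z`, `W \ y`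
  have hab := hrel x hx y hy z hz hxy.ne (hxy.trans hyz).ne hyz
  have hbc := hrel z hz x hx y hy (hxy.trans hyz).ne' hyz.ne' hxy
  have hac := hrel y hy x hx z hz hxy.ne' hyz.ne (hxy.trans hyz)
  rw [Finset.erase_right_comm (a := z), Finset.erase_right_comm (a := z) (b := y)] at hbc
  rw [Finset.erase_right_comm (a := y) (b := x)] at hac
  have ha := hdom x hx y hy hxy.ne
  have hb := hdom x hx z hz (hxy.trans hyz).ne
  have hc := hdom y hy z hz hyz.ne
  exact ⟨fun hX hZ => hac.1 (h.1.2.1 _ ha _ hb _ hc (hab.2 hX) (hbc.2 hZ)),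
    fun hX hZ hY => h.1.not_rel_trans ha hb hc (mt hab.1 hX) (mt hbc.1 hZ) (hac.2 hY)⟩

end IsAdmissible

lemma IsConsistent.of_le {N N' d : ℕ} {U : Set (Finset ℕ)} (hN : N ≤ N')
    (h : IsConsistent N' d U) : IsConsistent N d U := fun W hW =>
  h W (hW.trans (Finset.Icc_subset_Icc_right hN))

def contraction (U : Set (Finset ℕ)) (M : ℕ) : Set (Finset ℕ) := {T | insert M T ∈ U}

lemma lt_succ_of_mem_of_ne {N x : ℕ} {K : Finset ℕ} (hK : K ⊆ Finset.Icc 1 (N + 1))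
    (hx : x ∈ K) (hne : x ≠ N + 1) : x < N + 1 := by
  have := Finset.mem_Icc.1 (hK hx); omega

lemma subset_Icc_of_notMem {N : ℕ} {K : Finset ℕ} (hK : K ⊆ Finset.Icc 1 (N + 1))
    (hM : N + 1 ∉ K) : K ⊆ Finset.Icc 1 N := fun x hx => by
  have := lt_succ_of_mem_of_ne hK hx (ne_of_mem_of_not_mem hx hM)
  exact Finset.mem_Icc.2 ⟨(Finset.mem_Icc.1 (hK hx)).1, by omega⟩

lemma IsConsistent.contract {N d : ℕ} {U : Set (Finset ℕ)}
    (h : IsConsistent (N + 1) (d + 1) U) : IsConsistent N d (contraction U (N + 1)) := by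
  refine isConsistent_iff.2 fun W hW hc x hx y hy z hz hxy hyz => ?_
  have hM : N + 1 ∉ W := fun hM => by have := Finset.mem_Icc.1 (hW hM); omega
  have hext : ∀ u ∈ W, (W.erase u ∈ contraction U (N + 1) ↔ (insert (N + 1) W).erase u ∈ U) :=
    fun u hu => by
      rw [Finset.erase_insert_of_ne (ne_of_mem_of_not_mem hu hM).symm]
      rfl
  rw [hext x hx, hext y hy, hext z hz]
  refine isConsistent_iff.1 h _ ?_ ?_ x (Finset.mem_insert_of_mem hx) y
    (Finset.mem_insert_of_mem hy) z (Finset.mem_insert_of_mem hz) hxy hyz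
  · exact Finset.insert_subset (Finset.mem_Icc.2 ⟨by omega, le_rfl⟩)
      (hW.trans (Finset.Icc_subset_Icc_right (by omega)))
  · rw [Finset.card_insert_of_notMem hM, hc]

/-- `A → B` when, for `K = A ∪ B`, the `d`-set `A` precedes `B` in the packet `P(K)` ordered
antilexicographically if `K ∈ U` and lexicographically otherwise. -/
def PacketEdge (N d : ℕ) (U : Set (Finset ℕ)) (A B : Finset ℕ) : Prop :=
  ∃ K ⊆ Finset.Icc 1 N, K.card = d + 1 ∧
    ∃ x ∈ K, ∃ y ∈ K, x ≠ y ∧ (K ∈ U ↔ x < y) ∧ K.erase x = A ∧ K.erase y = B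

namespace PacketEdge

variable {N d : ℕ} {U : Set (Finset ℕ)} {A B : Finset ℕ}

lemma pos (h : PacketEdge N d U A B) : 1 < N ∧ 0 < d := by
  obtain ⟨K, hK, hc, x, hx, y, hy, hxy, -⟩ := h
  have h2 : 1 < K.card := Finset.one_lt_card.2 ⟨x, hx, y, hy, hxy⟩
  have hN := Finset.card_le_card hK
  rw [Nat.card_Icc] at hN
  omega

lemma of_notMem (h : PacketEdge (N + 1) d U A B) (hA : N + 1 ∉ A) (hB : N + 1 ∉ B) :
    PacketEdge N d U A B := by
  obtain ⟨K, hK, hc, x, hx, y, hy, hxy, hU, rfl, rfl⟩ := h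
  refine ⟨K, subset_Icc_of_notMem hK fun hM => hxy ?_, hc, x, hx, y, hy, hxy, hU, rfl, rfl⟩
  exact (Finset.eq_of_mem_of_notMem_erase hM hA).symm.trans (Finset.eq_of_mem_of_notMem_erase hM hB)

lemma contract (h : PacketEdge (N + 1) (d + 1) U A B) (hA : N + 1 ∈ A) (hB : N + 1 ∈ B) :
    PacketEdge N d (contraction U (N + 1)) (A.erase (N + 1)) (B.erase (N + 1)) := by
  obtain ⟨K, hK, hc, x, hx, y, hy, hxy, hU, rfl, rfl⟩ := h
  obtain ⟨hMx, hM⟩ := Finset.mem_erase.1 hA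
  have hMy := (Finset.mem_erase.1 hB).1
  refine ⟨K.erase (N + 1), subset_Icc_of_notMem ((K.erase_subset _).trans hK)
      (Finset.notMem_erase _ _), by rw [Finset.card_erase_of_mem hM, hc]; rfl,
    x, Finset.mem_erase.2 ⟨hMx.symm, hx⟩, y, Finset.mem_erase.2 ⟨hMy.symm, hy⟩, hxy, ?_,
    Finset.erase_right_comm, Finset.erase_right_comm⟩
  rw [← hU]
  exact iff_of_eq (congrArg (· ∈ U) (Finset.insert_erase hM))

lemma insert_mem_right (h : PacketEdge (N + 1) d U A B) (hA : N + 1 ∈ A) (hB : N + 1 ∉ B) :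
    insert (N + 1) B ∈ U := by
  obtain ⟨K, hK, hc, x, hx, y, hy, hxy, hU, rfl, rfl⟩ := h
  obtain ⟨hMx, hM⟩ := Finset.mem_erase.1 hA
  obtain rfl : y = N + 1 := by by_contra hMy; exact hB (Finset.mem_erase.2 ⟨Ne.symm hMy, hM⟩)
  rw [Finset.insert_erase hM]
  exact hU.2 (lt_succ_of_mem_of_ne hK hx hMx.symm)

lemma insert_notMem_left (h : PacketEdge (N + 1) d U A B) (hA : N + 1 ∉ A) (hB : N + 1 ∈ B) :
    insert (N + 1) A ∉ U := by
  obtain ⟨K, hK, hc, x, hx, y, hy, hxy, hU, rfl, rfl⟩ := h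
  obtain ⟨hMy, hM⟩ := Finset.mem_erase.1 hB
  obtain rfl : x = N + 1 := by by_contra hMx; exact hA (Finset.mem_erase.2 ⟨Ne.symm hMx, hM⟩)
  rw [Finset.insert_erase hM, hU]
  exact (lt_succ_of_mem_of_ne hK hy hMy.symm).not_gt

lemma insert_mem_of_insert_mem (hU : IsConsistent (N + 1) (d + 1) U)
    (h : PacketEdge (N + 1) (d + 1) U A B) (hA : N + 1 ∉ A) (hB : N + 1 ∉ B)
    (hAU : insert (N + 1) A ∈ U) : insert (N + 1) B ∈ U := by
  obtain ⟨K, hK, hc, x, hx, y, hy, hxy, hKU, rfl, rfl⟩ := h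
  have hM : N + 1 ∉ K := fun hM => hxy
    ((Finset.eq_of_mem_of_notMem_erase hM hA).symm.trans (Finset.eq_of_mem_of_notMem_erase hM hB))
  have hxM : x ≠ N + 1 := ne_of_mem_of_not_mem hx hM
  have hyM : y ≠ N + 1 := ne_of_mem_of_not_mem hy hM
  rw [← Finset.erase_insert_of_ne hxM.symm] at hAU
  rw [← Finset.erase_insert_of_ne hyM.symm]
  have hKW : (insert (N + 1) K).erase (N + 1) = K := Finset.erase_insert hM
  -- consistency on `K ∪ {N + 1}`, whose packet contains `K`, `A ∪ {N + 1}` and `B ∪ {N + 1}`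
  have hW := isConsistent_iff.1 hU (insert (N + 1) K)
    (Finset.insert_subset (Finset.mem_Icc.2 ⟨by omega, le_rfl⟩) hK)
    (by rw [Finset.card_insert_of_notMem hM, hc])
  have hmem : ∀ u ∈ K, u ∈ insert (N + 1) K := fun u hu => Finset.mem_insert_of_mem hu
  have hMmem : N + 1 ∈ insert (N + 1) K := Finset.mem_insert_self _ _
  rcases hxy.lt_or_gt with hlt | hgt
  · exact (hW x (hmem x hx) y (hmem y hy) _ hMmem hlt (lt_succ_of_mem_of_ne hK hy hyM)).1 hAU
      (by rw [hKW]; exact hKU.2 hlt)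
  · by_contra hBU
    exact (hW y (hmem y hy) x (hmem x hx) _ hMmem hgt (lt_succ_of_mem_of_ne hK hx hxM)).2 hBU
      (by rw [hKW]; exact fun hK => (hKU.1 hK).not_gt hgt) hAU

end PacketEdge

section Potential

variable {α β : Type*} [Preorder β] {E : α → α → Prop} {ρ : α → β} {F : β → α → α → Prop}

lemma transGen_lt_or_eq_of_potential
    (hE : ∀ a b, E a b → ρ a < ρ b ∨ ρ a = ρ b ∧ F (ρ a) a b) {a b : α} (h : Relation.TransGen E a b) :
    ρ a < ρ b ∨ ρ a = ρ b ∧ Relation.TransGen (F (ρ a)) a b := by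
  induction h with
  | single hab => exact (hE _ _ hab).imp_right fun h => ⟨h.1, .single h.2⟩
  | tail _ hbc ih =>
    rcases hE _ _ hbc with hlt | ⟨heq, hF⟩
    · exact .inl (ih.elim (·.trans hlt) (·.1.trans_lt hlt))
    · refine ih.imp (·.trans_eq heq) fun h => ⟨h.1.trans heq, h.2.tail ?_⟩
      rwa [h.1]

lemma not_transGen_self_of_potential
    (hE : ∀ a b, E a b → ρ a < ρ b ∨ ρ a = ρ b ∧ F (ρ a) a b)
    (hF : ∀ v a, ¬ Relation.TransGen (F v) a a) (a : α) : ¬ Relation.TransGen E a a := fun h =>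
  (transGen_lt_or_eq_of_potential hE h).elim (lt_irrefl _) fun h => hF _ a h.2

end Potential

theorem exists_isStrictTotalOrder_of_acyclic {α : Type*} {E : α → α → Prop}
    (hE : ∀ a, ¬ Relation.TransGen E a a) : ∃ r, IsStrictTotalOrder α r ∧ E ≤ r := by
  have : IsPartialOrder α (Relation.ReflTransGen E) :=
    { refl := fun _ => .refl
      trans := fun _ _ _ => .trans
      antisymm := fun a b hab hba => by
        rcases Relation.reflTransGen_iff_eq_or_transGen.1 hab with rfl | hab
        · rfl
        · exact (hE a (hab.trans_left hba)).elim }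
  obtain ⟨s, hs, hEs⟩ := extend_partialOrder (Relation.ReflTransGen E)
  refine ⟨fun a b => ¬ s b a, ?_, fun a b hab hba => hE a ?_⟩
  · exact
      { trichotomous := fun a b hab hba => antisymm (not_not.1 hba) (not_not.1 hab)
        irrefl := fun a h => h (refl a)
        trans := fun a b c hab hbc hca =>
          hbc (_root_.trans hca ((total_of s a b).resolve_right hab)) }
  · obtain rfl : a = b := antisymm (hEs _ _ (.single hab)) hba
    exact .single hab

open Classical in
noncomputable def packetPotential (U : Set (Finset ℕ)) (M : ℕ) (A : Finset ℕ) : ℕ :=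
  if M ∈ A then 1 else if insert M A ∈ U then 2 else 0

theorem PacketEdge.acyclic {N d : ℕ} {U : Set (Finset ℕ)} (hU : IsConsistent N d U)
    (A : Finset ℕ) : ¬ Relation.TransGen (PacketEdge N d U) A A := by
  induction N generalizing d U A with
  | zero =>
    intro h
    obtain ⟨B, hAB, -⟩ := Relation.TransGen.head'_iff.1 h
    exact absurd hAB.pos.1 (by omega)
  | succ N ih =>
    obtain _ | d := d
    · intro h
      obtain ⟨B, hAB, -⟩ := Relation.TransGen.head'_iff.1 h
      exact absurd hAB.pos.2 (lt_irrefl 0)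
    refine not_transGen_self_of_potential (ρ := packetPotential U (N + 1))
      (F := fun v A B => if v = 1
        then PacketEdge N d (contraction U (N + 1)) (A.erase (N + 1)) (B.erase (N + 1))
        else PacketEdge N (d + 1) U A B) (fun A B h => ?_) (fun v => ?_) A
    · by_cases hA : N + 1 ∈ A <;> by_cases hB : N + 1 ∈ B
      · simp [packetPotential, hA, hB, h.contract hA hB]
      · simp [packetPotential, hA, hB, h.insert_mem_right hA hB]
      · simp [packetPotential, hA, hB, h.insert_notMem_left hA hB]
      · by_cases hAU : insert (N + 1) A ∈ U
        · simp [packetPotential, hA, hB, hAU, h.insert_mem_of_insert_mem hU hA hB hAU,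
            h.of_notMem hA hB]
        · by_cases hBU : insert (N + 1) B ∈ U <;>
            simp [packetPotential, hA, hB, hAU, hBU, h.of_notMem hA hB]
    · split_ifs
      · exact fun A h => ih hU.contract (A.erase (N + 1)) (h.lift _ fun _ _ => id)
      · exact ih (hU.of_le N.le_succ)

theorem exists_isAdmissible_of_isConsistent {n d : ℕ} (hd : 1 ≤ d) {I : Set (Finset ℕ)}
    (hI : ∀ s ∈ I, s ⊆ Finset.Icc 1 n ∧ s.card = d + 1) (h : IsConsistent n d I) :
    ∃ r, IsAdmissible n d r ∧ I = invOrder n d r := by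
  obtain ⟨r, hr, hEr⟩ := exists_isStrictTotalOrder_of_acyclic (PacketEdge.acyclic h)
  have hlin : IsLinOrderOn {s | s ⊆ Finset.Icc 1 n ∧ s.card = d} r :=
    ⟨fun a _ => irrefl a, fun a _ b _ c _ => _root_.trans, fun a _ b _ hab =>
      (trichotomous_of r a b).imp_right (·.resolve_left hab)⟩
  have hanti : ∀ K ⊆ Finset.Icc 1 n, K.card = d + 1 → K ∈ I → PacketAntilex d r K :=
    fun K hK hc hKI => (packetAntilex_iff hc).2 fun x hx y hy hxy =>
      hEr _ _ ⟨K, hK, hc, x, hx, y, hy, hxy.ne, iff_of_true hKI hxy, rfl, rfl⟩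
  have hlex : ∀ K ⊆ Finset.Icc 1 n, K.card = d + 1 → K ∉ I → PacketLex d r K :=
    fun K hK hc hKI => (packetLex_iff hc).2 fun x hx y hy hxy =>
      hEr _ _ ⟨K, hK, hc, y, hy, x, hx, hxy.ne', iff_of_false hKI hxy.not_gt, rfl, rfl⟩
  refine ⟨r, ⟨hlin, fun K hK hc => (em (K ∈ I)).symm.imp (hlex K hK hc) (hanti K hK hc)⟩, ?_⟩
  ext K
  refine ⟨fun hK => ⟨(hI K hK).1, (hI K hK).2, hanti K (hI K hK).1 (hI K hK).2 hK⟩, ?_⟩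
  rintro ⟨hK, hc, hKanti⟩
  by_contra hKI
  -- a packet of size `d + 1 ≥ 2` cannot be ordered both ways
  exact asymm (hKanti 1 2 le_rfl one_lt_two (by omega))
    (hlex K hK hc hKI 1 2 le_rfl one_lt_two (by omega))

theorem ziegler_criterion_general (n d : ℕ) (hd : 1 ≤ d)
    (I : Set (Finset ℕ)) (hI : ∀ s ∈ I, s ⊆ Finset.Icc 1 n ∧ s.card = d + 1) :
    (∃ r : Finset ℕ → Finset ℕ → Prop, IsAdmissible n d r ∧ I = invOrder n d r) ↔
    IsConsistent n d I :=
  ⟨fun ⟨_, hr, hinv⟩ => hinv ▸ hr.isConsistent_invOrder, exists_isAdmissible_of_isConsistent hd hI⟩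

/-- (Ziegler) A set `I` of `(d+1)`-element subsets of `[n]` is the inversion set of some
admissible linear order on the `d`-element subsets of `[n]` iff `I` is consistent. -/
theorem ziegler_criterion (n d : ℕ) (hd : 1 ≤ d) (hdn : d ≤ n)
    (I : Set (Finset ℕ)) (hI : ∀ s ∈ I, s ⊆ Finset.Icc 1 n ∧ s.card = d + 1) :
    (∃ r : Finset ℕ → Finset ℕ → Prop, IsAdmissible n d r ∧ I = invOrder n d r) ↔
    IsConsistent n d I :=
  ziegler_criterion_general n d hd I hI
end

section
/- Commutativity of disjoint insertions: let d ≥ 1, let k_0, k_1 be nonnegative integers, let n, m, m′ > d with k_0 + d + k_1 + d ≤ n, and let I, I′, I″ be consistent sets of (d+1)-element subsets of [n], [m], [m′] respectively. Then (I ∘_{k_0} I′) ∘_{k_0+m+k_1} I″ = (I ∘_{k_0+d+k_1} I″) ∘_{k_0} I′, as sets of (d+1)-element subsets of [n+m+m′−2d]. -/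
/-- `I` is a family of `(d+1)`-element subsets of `[N]`. -/
def IsGrassFamily (N d : ℕ) (I : Set (Finset ℕ)) : Prop :=
  ∀ s ∈ I, s ⊆ Finset.Icc 1 N ∧ s.card = d + 1

/-- The `c` largest elements of a finset `s` of naturals. -/
def topPart (s : Finset ℕ) (c : ℕ) : Finset ℕ :=
  ((s.sort (· ≤ ·)).reverse.take c).toFinset

/-- The insertion `I ∘_j I′` of a set `I′` of `(d+1)`-subsets of `[m]` into a set `I` of
`(d+1)`-subsets of `[n]` at position `j` (`0 ≤ j ≤ n − d`), a set of `(d+1)`-subsets of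
`[n+m−d]`.  Here `[n+m−d] = A ∪ B ∪ C` with `A = {1,…,j}`, `B = {j+1,…,j+m}`,
`C = {j+m+1,…,n+m−d}`, `D = {j+1,…,j+d} ⊆ B`, and `ψ` is the inverse of the unique
increasing bijection `φ : [n] → A ∪ D ∪ C`.  A `(d+1)`-subset `L` of `[n+m−d]` lies in
`I ∘_j I′` iff: (i) `L ⊆ B` and `L − j ∈ I′`; or (ii) `L ⊆ A ∪ D ∪ C` and `φ⁻¹(L) ∈ I`;
or (iii) neither, and `φ⁻¹(L̄) ∈ I` where `L̄ = L⁺ ∪ f(L⁻)`, `L⁺ = L ∩ (A ∪ D ∪ C)`,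
`L⁻ = L ∩ (B ∖ D)`, and `f(L⁻)` consists of the `|L⁻|` largest elements of `D ∖ L⁺`. -/
def insSet (d n m j : ℕ) (I I' : Set (Finset ℕ)) : Set (Finset ℕ) :=
  let A : Finset ℕ := Finset.Icc 1 j
  let B : Finset ℕ := Finset.Icc (j + 1) (j + m)
  let D : Finset ℕ := Finset.Icc (j + 1) (j + d)
  let C : Finset ℕ := Finset.Icc (j + m + 1) (n + m - d)
  let ψ : ℕ → ℕ := fun y => if y ≤ j + d then y else y - (m - d)
  {L | L ⊆ Finset.Icc 1 (n + m - d) ∧ L.card = d + 1 ∧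
    ((L ⊆ B ∧ L.image (· - j) ∈ I') ∨
     (L ⊆ A ∪ D ∪ C ∧ L.image ψ ∈ I) ∨
     (¬ L ⊆ B ∧ ¬ L ⊆ A ∪ D ∪ C ∧
       ((L ∩ (A ∪ D ∪ C)) ∪
          topPart (D \ (L ∩ (A ∪ D ∪ C))) (L ∩ (B \ D)).card).image ψ ∈ I))}

/-!
Outside the block of the inserted family, membership in `I ∘_j I′` is decided by the collapse
`L ↦ φ⁻¹(L̄)`, which squeezes the block `(j, j + m]` onto its first `d` places and moves
everything to its right down by `m − d`. The fill `f(L⁻)` depends only on `L` inside the block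
and commutes with shifts, so collapsing two disjoint blocks in either order gives the same set.
A `(d+1)`-set inside one block is merely shifted by the collapse of the other, and a set leaving
both blocks still leaves both after either collapse, so the two sides agree case by case.
-/

open Finset

namespace Finset

lemma sort_image_of_strictMono {α β : Type*} [LinearOrder α] [LinearOrder β] {f : α → β}
    (hf : StrictMono f) (s : Finset α) :
    (s.image f).sort (· ≤ ·) = (s.sort (· ≤ ·)).map f := by
  refine List.Perm.eq_of_pairwise' (r := (· ≤ ·)) (pairwise_sort _ _) ?_ ?_
  · rw [List.pairwise_map]
    exact (pairwise_sort s _).imp fun h => hf.monotone h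
  · rw [← Multiset.coe_eq_coe, sort_eq, ← Multiset.map_coe, sort_eq]
    exact image_val_of_injOn hf.injective.injOn

end Finset

lemma topPart_zero (s : Finset ℕ) : topPart s 0 = ∅ := by
  simp [topPart]

lemma topPart_subset (s : Finset ℕ) (c : ℕ) : topPart s c ⊆ s := fun x hx => by
  simpa [topPart] using List.mem_of_mem_take (List.mem_toFinset.1 hx)

lemma card_topPart {s : Finset ℕ} {c : ℕ} (h : c ≤ s.card) : (topPart s c).card = c := by
  rw [topPart, List.card_toFinset, List.Nodup.dedup
    ((List.nodup_reverse.2 (s.sort_nodup _)).sublist (List.take_sublist _ _))]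
  simpa using h

lemma topPart_image_of_strictMono {f : ℕ → ℕ} (hf : StrictMono f) (s : Finset ℕ) (c : ℕ) :
    topPart (s.image f) c = (topPart s c).image f := by
  simp only [topPart, sort_image_of_strictMono hf, ← List.map_reverse, ← List.map_take]
  ext
  simp only [List.mem_toFinset, List.mem_map, mem_image]

def blockFill (j d m : ℕ) (L : Finset ℕ) : Finset ℕ :=
  topPart (Icc (j + 1) (j + d) \ L) {y ∈ L | j + d < y ∧ y ≤ j + m}.card

/-- `collapseBlock j d m L` is `φ⁻¹(L̄)` for the insertion at `j` of a family on `[m]`: the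
block `(j, j + m]` is squeezed onto `D = (j, j + d]`, where `blockFill j d m L = f(L⁻)` is added,
and everything right of the block moves down by `m - d`. Unlike `insSet` it does not mention `n`. -/
def collapseBlock (j d m : ℕ) (L : Finset ℕ) : Finset ℕ :=
  {y ∈ L | y ≤ j + d} ∪ blockFill j d m L ∪ {y ∈ L | j + m < y}.image (· - (m - d))

section Collapse

variable {j d m : ℕ} {L : Finset ℕ}

lemma mem_blockFill {x : ℕ} (hx : x ∈ blockFill j d m L) : j < x ∧ x ≤ j + d ∧ x ∉ L := by
  have := topPart_subset _ _ hx
  rw [mem_sdiff, mem_Icc] at this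
  exact ⟨by omega, this.1.2, this.2⟩

lemma mem_collapseBlock (hdm : d ≤ m) {x : ℕ} :
    x ∈ collapseBlock j d m L ↔
      x ≤ j + d ∧ (x ∈ L ∨ x ∈ blockFill j d m L) ∨ j + d < x ∧ x + (m - d) ∈ L := by
  simp only [collapseBlock, mem_union, mem_filter, mem_image]
  constructor
  · rintro ((⟨hxL, hx⟩ | hx) | ⟨y, ⟨hyL, hy⟩, rfl⟩)
    · exact Or.inl ⟨hx, Or.inl hxL⟩
    · exact Or.inl ⟨(mem_blockFill hx).2.1, Or.inr hx⟩
    · exact Or.inr ⟨by omega, by rwa [Nat.sub_add_cancel (by omega)]⟩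
  · rintro (⟨hx, hxL | hxF⟩ | ⟨hx, hxL⟩)
    · exact Or.inl (Or.inl ⟨hxL, hx⟩)
    · exact Or.inl (Or.inr hxF)
    · exact Or.inr ⟨x + (m - d), ⟨hxL, by omega⟩, by omega⟩

lemma blockFill_add {L' : Finset ℕ} (s : ℕ) (hdm : d ≤ m)
    (h : ∀ y, j < y → y ≤ j + m → (y ∈ L ↔ y + s ∈ L')) :
    blockFill (j + s) d m L' = (blockFill j d m L).image (· + s) := by
  have hmono : StrictMono (· + s) := fun _ _ h => by simpa using h
  have hgap : Icc (j + s + 1) (j + s + d) \ L' = (Icc (j + 1) (j + d) \ L).image (· + s) := by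
    ext x
    simp only [mem_sdiff, mem_Icc, mem_image]
    constructor
    · rintro ⟨hx, hxL⟩
      refine ⟨x - s, ⟨by omega, fun h' => hxL ?_⟩, by omega⟩
      rw [← Nat.sub_add_cancel (by omega : s ≤ x)]
      exact (h _ (by omega) (by omega)).1 h'
    · rintro ⟨y, ⟨hy, hyL⟩, rfl⟩
      exact ⟨by omega, fun h' => hyL ((h y (by omega) (by omega)).2 h')⟩
  have hcount : {y ∈ L' | j + s + d < y ∧ y ≤ j + s + m} =
      {y ∈ L | j + d < y ∧ y ≤ j + m}.image (· + s) := by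
    ext x
    simp only [mem_filter, mem_image]
    constructor
    · rintro ⟨hxL, hx⟩
      refine ⟨x - s, ⟨(h _ (by omega) (by omega)).2 ?_, by omega⟩, by omega⟩
      rwa [Nat.sub_add_cancel (by omega)]
    · rintro ⟨y, ⟨hyL, hy⟩, rfl⟩
      exact ⟨(h y (by omega) (by omega)).1 hyL, by omega⟩
  rw [blockFill, blockFill, hgap, hcount, card_image_of_injective _ hmono.injective,
    topPart_image_of_strictMono hmono]

lemma blockFill_congr {L' : Finset ℕ} (hdm : d ≤ m)
    (h : ∀ y, j < y → y ≤ j + m → (y ∈ L ↔ y ∈ L')) :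
    blockFill j d m L' = blockFill j d m L := by
  simpa using blockFill_add 0 hdm (by simpa using h)

lemma collapseBlock_of_le (hdm : d ≤ m) (h : ∀ y ∈ L, y ≤ j + d) : collapseBlock j d m L = L := by
  have hQ : {y ∈ L | j + d < y ∧ y ≤ j + m} = ∅ := filter_false_of_mem fun y hy => by
    have := h y hy; omega
  have hR : {y ∈ L | j + m < y} = ∅ := filter_false_of_mem fun y hy => by
    have := h y hy; omega
  rw [collapseBlock, blockFill, hQ, hR, filter_true_of_mem h, card_empty, topPart_zero,
    image_empty, union_empty, union_empty]

lemma collapseBlock_of_lt (hdm : d ≤ m) (h : ∀ y ∈ L, j + m < y) :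
    collapseBlock j d m L = L.image (· - (m - d)) := by
  have hP : {y ∈ L | y ≤ j + d} = ∅ := filter_false_of_mem fun y hy => by
    have := h y hy; omega
  have hQ : {y ∈ L | j + d < y ∧ y ≤ j + m} = ∅ := filter_false_of_mem fun y hy => by
    have := h y hy; omega
  rw [collapseBlock, blockFill, hP, hQ, filter_true_of_mem h, card_empty, topPart_zero,
    union_empty, empty_union]

/-- The `d` places of `(j, j + d]` have room for `L⁻`, as `L` has at most `d` elements in the
block. -/
lemma card_blockFill (hdm : d ≤ m) (hL : L.card = d + 1) (hB : ¬ L ⊆ Icc (j + 1) (j + m)) :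
    (blockFill j d m L).card = {y ∈ L | j + d < y ∧ y ≤ j + m}.card := by
  refine card_topPart ?_
  have hlt : {y ∈ L | j < y ∧ y ≤ j + m}.card < L.card := by
    obtain ⟨y, hy, hyB⟩ := not_subset.1 hB
    exact card_lt_card (filter_ssubset.2 ⟨y, hy, fun h => hyB (mem_Icc.2 (by omega))⟩)
  have hsplit : {y ∈ L | j < y ∧ y ≤ j + m} =
      Icc (j + 1) (j + d) ∩ L ∪ {y ∈ L | j + d < y ∧ y ≤ j + m} := by
    ext y
    simp only [mem_filter, mem_union, mem_inter, mem_Icc]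
    by_cases hy : y ∈ L <;> simp only [hy, true_and, and_true, false_and, and_false, or_false]
    omega
  have hdisj : Disjoint (Icc (j + 1) (j + d) ∩ L) {y ∈ L | j + d < y ∧ y ≤ j + m} :=
    disjoint_left.2 fun y hy hy' => by
      simp only [mem_filter, mem_inter, mem_Icc] at hy hy'; omega
  have hD := card_sdiff_add_card_inter (Icc (j + 1) (j + d)) L
  rw [hsplit, card_union_of_disjoint hdisj] at hlt
  simp only [Nat.card_Icc] at hD
  omega

lemma card_collapseBlock (hdm : d ≤ m) (hL : L.card = d + 1)
    (hB : ¬ L ⊆ Icc (j + 1) (j + m)) : (collapseBlock j d m L).card = d + 1 := by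
  have hF : ∀ x ∈ blockFill j d m L, j < x ∧ x ≤ j + d ∧ x ∉ L := fun x hx => mem_blockFill hx
  have hsplit : #{y ∈ L | y ≤ j + d} + #{y ∈ L | j + d < y ∧ y ≤ j + m} + #{y ∈ L | j + m < y}
      = #L := by
    rw [← card_union_of_disjoint, ← card_union_of_disjoint]
    · congr 1; ext y; simp only [mem_union, mem_filter]; grind
    all_goals
      refine disjoint_left.2 fun y h₁ h₂ => ?_
      simp only [mem_union, mem_filter] at h₁ h₂
      omega
  have hinj : Set.InjOn (· - (m - d)) ({y ∈ L | j + m < y} : Finset ℕ) := fun x hx y hy hxy => by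
    simp only [mem_coe, mem_filter] at hx hy hxy; omega
  rw [collapseBlock, card_union_of_disjoint, card_union_of_disjoint, card_image_of_injOn hinj,
    card_blockFill hdm hL hB, ← hL, ← hsplit]
  all_goals
    refine disjoint_left.2 fun y h₁ h₂ => ?_
    simp only [mem_union, mem_filter, mem_image] at h₁ h₂
    grind

lemma collapseBlock_subset_Icc {N : ℕ} (hdm : d ≤ m) (hjN : j + d ≤ N)
    (hL : L ⊆ Icc 1 (N + (m - d))) : collapseBlock j d m L ⊆ Icc 1 N := fun x hx => by
  rw [mem_Icc]
  rcases (mem_collapseBlock hdm).1 hx with ⟨hx, hxL | hxF⟩ | ⟨hx, hxL⟩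
  · have := mem_Icc.1 (hL hxL); omega
  · have := mem_blockFill hxF; omega
  · have := mem_Icc.1 (hL hxL); omega

lemma exists_mem_collapseBlock (hdm : d ≤ m) (hL : L.card = d + 1)
    (hB : ¬ L ⊆ Icc (j + 1) (j + m)) {y : ℕ} (hy : y ∈ L) :
    ∃ x ∈ collapseBlock j d m L, (y ≤ j + d ∧ x = y) ∨
      (j + d < y ∧ y ≤ j + m ∧ j < x ∧ x ≤ j + d) ∨ (j + m < y ∧ x + (m - d) = y) := by
  by_cases hy₁ : y ≤ j + d
  · exact ⟨y, (mem_collapseBlock hdm).2 (Or.inl ⟨hy₁, Or.inl hy⟩), Or.inl ⟨hy₁, rfl⟩⟩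
  by_cases hy₂ : y ≤ j + m
  · have hne : (blockFill j d m L).Nonempty := by
      rw [← card_pos, card_blockFill hdm hL hB, card_pos]
      exact ⟨y, mem_filter.2 ⟨hy, by omega, hy₂⟩⟩
    obtain ⟨x, hx⟩ := hne
    have := mem_blockFill hx
    exact ⟨x, (mem_collapseBlock hdm).2 (Or.inl ⟨this.2.1, Or.inr hx⟩),
      Or.inr (Or.inl ⟨by omega, hy₂, this.1, this.2.1⟩)⟩
  · refine ⟨y - (m - d), (mem_collapseBlock hdm).2 (Or.inr ⟨by omega, ?_⟩),
      Or.inr (Or.inr ⟨by omega, by omega⟩)⟩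
    rwa [Nat.sub_add_cancel (by omega)]

lemma subset_Icc_of_collapseBlock_subset_Icc_of_le {a b : ℕ} (hdm : d ≤ m) (hL : L.card = d + 1)
    (hB : ¬ L ⊆ Icc (j + 1) (j + m)) (hb : b ≤ j) (h : collapseBlock j d m L ⊆ Icc a b) :
    L ⊆ Icc a b := fun y hy => by
  obtain ⟨x, hx, hxy⟩ := exists_mem_collapseBlock hdm hL hB hy
  have := mem_Icc.1 (h hx)
  rw [mem_Icc]; omega

lemma subset_Icc_of_collapseBlock_subset_Icc_of_lt {a b : ℕ} (hdm : d ≤ m) (hL : L.card = d + 1)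
    (hB : ¬ L ⊆ Icc (j + 1) (j + m)) (ha : j + d < a) (h : collapseBlock j d m L ⊆ Icc a b) :
    L ⊆ Icc (a + (m - d)) (b + (m - d)) := fun y hy => by
  obtain ⟨x, hx, hxy⟩ := exists_mem_collapseBlock hdm hL hB hy
  have := mem_Icc.1 (h hx)
  rw [mem_Icc]; omega

end Collapse

section CollapseComm

variable {j₁ j₂ d m₁ m₂ : ℕ} {L : Finset ℕ}

/-- Collapsing the left block moves the right one down by `m₁ - d`. -/
theorem collapseBlock_comm (hd₁ : d ≤ m₁) (hd₂ : d ≤ m₂) (hj : j₁ + d ≤ j₂) :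
    collapseBlock j₁ d m₁ (collapseBlock (j₂ + (m₁ - d)) d m₂ L) =
      collapseBlock j₂ d m₂ (collapseBlock j₁ d m₁ L) := by
  have hfill₁ : blockFill j₁ d m₁ (collapseBlock (j₂ + (m₁ - d)) d m₂ L) = blockFill j₁ d m₁ L := by
    refine blockFill_congr hd₁ fun y hy hy' => ?_
    rw [mem_collapseBlock hd₂]
    constructor
    · intro hyL; exact Or.inl ⟨by omega, Or.inl hyL⟩
    · rintro (⟨-, hyL | hyF⟩ | ⟨hy'', -⟩)
      · exact hyL
      · have := mem_blockFill hyF; omega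
      · omega
  have hfill₂ : blockFill (j₂ + (m₁ - d)) d m₂ L =
      (blockFill j₂ d m₂ (collapseBlock j₁ d m₁ L)).image (· + (m₁ - d)) := by
    refine blockFill_add (m₁ - d) hd₂ fun y hy _ => ?_
    rw [mem_collapseBlock hd₁]
    constructor
    · rintro (⟨hy', -⟩ | ⟨-, hyL⟩)
      · omega
      · exact hyL
    · intro hyL; exact Or.inr ⟨by omega, hyL⟩
  ext x
  simp only [mem_collapseBlock hd₁, mem_collapseBlock hd₂, hfill₁, hfill₂,
    (add_left_injective (m₁ - d)).mem_finset_image, mem_image]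
  have hF₁ : x ∈ blockFill j₁ d m₁ L → j₁ < x ∧ x ≤ j₁ + d := fun h => by
    have := mem_blockFill h; omega
  have hF₂ : ∀ y ∈ blockFill j₂ d m₂ (collapseBlock j₁ d m₁ L), j₂ < y ∧ y ≤ j₂ + d := fun y h => by
    have := mem_blockFill h; omega
  rw [add_right_comm x (m₂ - d)]
  grind

end CollapseComm

lemma mem_insSet_iff {d n m j : ℕ} {I I' : Set (Finset ℕ)} {L : Finset ℕ} (hdm : d ≤ m) :
    L ∈ insSet d n m j I I' ↔ L ⊆ Icc 1 (n + m - d) ∧ L.card = d + 1 ∧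
      if L ⊆ Icc (j + 1) (j + m) then L.image (· - j) ∈ I' else collapseBlock j d m L ∈ I := by
  simp only [insSet, Set.mem_ofPred_eq]
  refine and_congr_right fun hsub => and_congr_right fun hcard => ?_
  set S := Icc 1 j ∪ Icc (j + 1) (j + d) ∪ Icc (j + m + 1) (n + m - d)
  set ψ : ℕ → ℕ := fun y => if y ≤ j + d then y else y - (m - d)
  have hLS : L ∩ S = {y ∈ L | y ≤ j + d} ∪ {y ∈ L | j + m < y} := by
    ext y
    by_cases hy : y ∈ L
    · have := mem_Icc.1 (hsub hy)
      simp only [S, hy, mem_inter, mem_union, mem_filter, mem_Icc, true_and]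
      omega
    · simp [hy]
  have hgap : Icc (j + 1) (j + d) \ (L ∩ S) = Icc (j + 1) (j + d) \ L := by
    ext y; simp only [S, mem_sdiff, mem_inter, mem_union, mem_Icc]; grind
  have hcount : L ∩ (Icc (j + 1) (j + m) \ Icc (j + 1) (j + d)) =
      {y ∈ L | j + d < y ∧ y ≤ j + m} := by
    ext y; simp only [mem_inter, mem_sdiff, mem_filter, mem_Icc]; grind
  have hbar : ((L ∩ S) ∪ topPart (Icc (j + 1) (j + d) \ (L ∩ S))
      (L ∩ (Icc (j + 1) (j + m) \ Icc (j + 1) (j + d))).card).image ψ =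
        collapseBlock j d m L := by
    rw [hgap, hLS, hcount, ← blockFill, image_union, image_union, collapseBlock,
      union_right_comm, image_congr (g := id), image_id, image_congr (g := id), image_id,
      image_congr (g := (· - (m - d)))]
    · intro y hy; simp only [mem_coe, mem_filter] at hy; simp only [ψ]; split_ifs <;> omega
    · intro y hy; have := mem_blockFill hy; simp [ψ, this.2.1]
    · intro y hy; simp only [mem_coe, mem_filter] at hy; simp [ψ, hy.2]
  have hBS : L ⊆ Icc (j + 1) (j + m) → ¬ L ⊆ S := fun hB hS => by
    have hD : L ⊆ Icc (j + 1) (j + d) := fun y hy => by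
      have h₁ := mem_Icc.1 (hB hy); have h₂ := hS hy
      simp only [S, mem_union, mem_Icc] at h₂ ⊢
      omega
    have := card_le_card hD
    simp only [Nat.card_Icc] at this
    omega
  -- branch (ii) of the definition is the case `L⁻ = ∅` of branch (iii)
  have hS : L ⊆ S → L.image ψ = ((L ∩ S) ∪ topPart (Icc (j + 1) (j + d) \ (L ∩ S))
      (L ∩ (Icc (j + 1) (j + m) \ Icc (j + 1) (j + d))).card).image ψ := fun hS => by
    have hempty : L ∩ (Icc (j + 1) (j + m) \ Icc (j + 1) (j + d)) = ∅ :=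
      eq_empty_of_forall_notMem fun y hy => by
        rw [mem_inter, mem_sdiff, mem_Icc, mem_Icc] at hy
        have := hS hy.1
        simp only [S, mem_union, mem_Icc] at this
        omega
    rw [inter_eq_left.2 hS, hempty, card_empty, topPart_zero, union_empty]
  rw [← hbar]
  split_ifs with hB
  · have := hBS hB; tauto
  · by_cases hLS' : L ⊆ S
    · rw [← hS hLS']; tauto
    · tauto

section Insertion

variable {d n m₁ m₂ j₁ j₂ : ℕ} {I I₁ I₂ : Set (Finset ℕ)} {L : Finset ℕ}

lemma collapseBlock_mem_insSet_of_subset_right (hd₁ : d ≤ m₁) (hd₂ : d ≤ m₂)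
    (hj : j₁ + d ≤ j₂) (hn : j₂ + d ≤ n) (hcard : L.card = d + 1)
    (hL : L ⊆ Icc (j₂ + (m₁ - d) + 1) (j₂ + (m₁ - d) + m₂)) :
    collapseBlock j₁ d m₁ L ∈ insSet d n m₂ j₂ I I₂ ↔ L.image (· - (j₂ + (m₁ - d))) ∈ I₂ := by
  have hbound : ∀ y ∈ L, j₂ + (m₁ - d) < y ∧ y ≤ j₂ + (m₁ - d) + m₂ := fun y hy => by
    have := mem_Icc.1 (hL hy); omega
  have hnB : ¬ L ⊆ Icc (j₁ + 1) (j₁ + m₁) := fun h => by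
    obtain ⟨y, hy⟩ := card_pos.1 (by omega : 0 < L.card)
    have := mem_Icc.1 (h hy); have := hbound y hy; omega
  have hsub := collapseBlock_subset_Icc (N := n + m₂ - d) (j := j₁) hd₁ (by omega)
    fun y hy => mem_Icc.2 (by have := hbound y hy; omega)
  have hcard' := card_collapseBlock hd₁ hcard hnB
  rw [collapseBlock_of_lt hd₁ fun y hy => by have := hbound y hy; omega] at hsub hcard' ⊢
  have hB : L.image (· - (m₁ - d)) ⊆ Icc (j₂ + 1) (j₂ + m₂) := fun x hx => by
    obtain ⟨y, hy, rfl⟩ := mem_image.1 hx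
    have := hbound y hy
    rw [mem_Icc]; omega
  rw [mem_insSet_iff hd₂, if_pos hB, image_image]
  simp only [hsub, hcard', true_and, Function.comp_def, Nat.sub_sub, add_comm (m₁ - d)]

lemma collapseBlock_mem_insSet_of_subset_left (hd₁ : d ≤ m₁) (hd₂ : d ≤ m₂)
    (hj : j₁ + d ≤ j₂) (hn : j₂ + d ≤ n) (hcard : L.card = d + 1)
    (hL : L ⊆ Icc (j₁ + 1) (j₁ + m₁)) :
    collapseBlock (j₂ + (m₁ - d)) d m₂ L ∈ insSet d n m₁ j₁ I I₁ ↔ L.image (· - j₁) ∈ I₁ := by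
  have hbound : ∀ y ∈ L, j₁ < y ∧ y ≤ j₁ + m₁ := fun y hy => by
    have := mem_Icc.1 (hL hy); omega
  have hsub : L ⊆ Icc 1 (n + m₁ - d) := fun y hy => mem_Icc.2 (by have := hbound y hy; omega)
  rw [collapseBlock_of_le hd₂ fun y hy => by have := hbound y hy; omega, mem_insSet_iff hd₁,
    if_pos hL]
  simp only [hsub, hcard, true_and]

theorem insSet_comm (hd₁ : d ≤ m₁) (hd₂ : d ≤ m₂) (hj : j₁ + d ≤ j₂) (hn : j₂ + d ≤ n) :
    insSet d (n + m₁ - d) m₂ (j₂ + (m₁ - d)) (insSet d n m₁ j₁ I I₁) I₂ =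
      insSet d (n + m₂ - d) m₁ j₁ (insSet d n m₂ j₂ I I₂) I₁ := by
  ext L
  rw [mem_insSet_iff (n := n + m₁ - d) hd₂, mem_insSet_iff (n := n + m₂ - d) hd₁,
    show n + m₂ - d + m₁ - d = n + m₁ - d + m₂ - d by omega]
  refine and_congr_right fun hsub => and_congr_right fun hcard => ?_
  split_ifs with h₂ h₁ h₁
  · obtain ⟨y, hy⟩ := card_pos.1 (by omega : 0 < L.card)
    have := mem_Icc.1 (h₁ hy); have := mem_Icc.1 (h₂ hy); omega
  · exact (collapseBlock_mem_insSet_of_subset_right hd₁ hd₂ hj hn hcard h₂).symm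
  · exact collapseBlock_mem_insSet_of_subset_left hd₁ hd₂ hj hn hcard h₁
  · have hK₂ : ¬ collapseBlock (j₂ + (m₁ - d)) d m₂ L ⊆ Icc (j₁ + 1) (j₁ + m₁) := fun h =>
      h₁ (subset_Icc_of_collapseBlock_subset_Icc_of_le hd₂ hcard h₂ (by omega) h)
    have hK₁ : ¬ collapseBlock j₁ d m₁ L ⊆ Icc (j₂ + 1) (j₂ + m₂) := fun h => h₂ <| by
      simpa only [add_right_comm _ _ (m₁ - d)] using
        subset_Icc_of_collapseBlock_subset_Icc_of_lt hd₁ hcard h₁ (by omega) h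
    have hK₂sub : collapseBlock (j₂ + (m₁ - d)) d m₂ L ⊆ Icc 1 (n + m₁ - d) :=
      collapseBlock_subset_Icc hd₂ (by omega) (by rwa [← Nat.add_sub_assoc hd₂])
    have hK₁sub : collapseBlock j₁ d m₁ L ⊆ Icc 1 (n + m₂ - d) :=
      collapseBlock_subset_Icc hd₁ (by omega)
        (by rwa [show n + m₂ - d + (m₁ - d) = n + m₁ - d + m₂ - d by omega])
    rw [mem_insSet_iff hd₁, mem_insSet_iff hd₂, if_neg hK₂, if_neg hK₁,
      collapseBlock_comm hd₁ hd₂ hj]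
    simp only [hK₁sub, hK₂sub, card_collapseBlock hd₁ hcard h₁, card_collapseBlock hd₂ hcard h₂,
      true_and]

end Insertion

theorem insertion_commutative_general
    (d k₀ k₁ n m m' : ℕ) (hm : d < m) (hm' : d < m')
    (hk : k₀ + d + k₁ + d ≤ n)
    (I I' I'' : Set (Finset ℕ)) :
    insSet d (n + m - d) m' (k₀ + m + k₁) (insSet d n m k₀ I I') I'' =
      insSet d (n + m' - d) m k₀ (insSet d n m' (k₀ + d + k₁) I I'') I' := by
  have h := insSet_comm (I := I) (I₁ := I') (I₂ := I'') hm.le hm'.le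
    (Nat.le_add_right (k₀ + d) k₁) hk
  rwa [show k₀ + d + k₁ + (m - d) = k₀ + m + k₁ by omega] at h

/-- Commutativity of disjoint insertions:
`(I ∘_{k₀} I′) ∘_{k₀+m+k₁} I″ = (I ∘_{k₀+d+k₁} I″) ∘_{k₀} I′` as sets of `(d+1)`-element
subsets of `[n+m+m′−2d]`. -/
theorem insertion_commutative
    (d k₀ k₁ n m m' : ℕ) (hd : 1 ≤ d) (hn : d < n) (hm : d < m) (hm' : d < m')
    (hk : k₀ + d + k₁ + d ≤ n)
    (I I' I'' : Set (Finset ℕ))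
    (hIfam : IsGrassFamily n d I) (hIcons : IsConsistent n d I)
    (hI'fam : IsGrassFamily m d I') (hI'cons : IsConsistent m d I')
    (hI''fam : IsGrassFamily m' d I'') (hI''cons : IsConsistent m' d I'') :
    insSet d (n + m - d) m' (k₀ + m + k₁) (insSet d n m k₀ I I') I'' =
      insSet d (n + m' - d) m k₀ (insSet d n m' (k₀ + d + k₁) I I'') I' :=
  insertion_commutative_general d k₀ k₁ n m m' hm hm' hk I I' I''
end

section
/- Inversion set of an inserted permutation: let σ ∈ S(n), τ ∈ S(m) and 1 ≤ j ≤ n, and let s : [n]∖{j} → [n+m−1] be given by s(x) = x for x < j and s(x) = x+m−1 for x > j. Then Inv(σ ∘_j τ) = {(j−1+a, j−1+b) : (a,b) ∈ Inv(τ)} ∪ {(s(x), s(y)) : (x,y) ∈ Inv(σ), x ≠ j, y ≠ j} ∪ {(s(x), j−1+t) : (x,j) ∈ Inv(σ), 1 ≤ t ≤ m} ∪ {(j−1+t, s(y)) : (j,y) ∈ Inv(σ), 1 ≤ t ≤ m}. -/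
/-- The reindexing map `s : [n] ∖ {j} → [n+m−1]`, `s(x) = x` for `x < j` and
`s(x) = x + m − 1` for `x > j`. -/
def sMap (j m x : ℕ) : ℕ := if x < j then x else x + m - 1

/-- Inversion set of an inserted permutation: if `ρ = σ ∘_j τ ∈ S(n+m−1)` is the insertion
of `τ ∈ S(m)` into `σ ∈ S(n)` at place `j`, then
`Inv(ρ) = {(j−1+a, j−1+b) : (a,b) ∈ Inv(τ)} ∪ {(s(x), s(y)) : (x,y) ∈ Inv(σ), x ≠ j ≠ y}`
`∪ {(s(x), j−1+t) : (x,j) ∈ Inv(σ), 1 ≤ t ≤ m} ∪ {(j−1+t, s(y)) : (j,y) ∈ Inv(σ), 1 ≤ t ≤ m}`. -/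
theorem inversions_of_inserted_permutation
    (n m j : ℕ) (hn : 1 ≤ n) (hm : 1 ≤ m) (hj1 : 1 ≤ j) (hjn : j ≤ n)
    (σ τ ρ : ℕ → ℕ)
    (hσ : IsPermOn n σ) (hτ : IsPermOn m τ)
    -- ρ = σ ∘_j τ :
    (hmid : ∀ x, j ≤ x → x ≤ j + m - 1 → ρ x = σ j - 1 + τ (x - j + 1))
    (hleft : ∀ x, 1 ≤ x → x < j →
      ρ x = if σ x < σ j then σ x else σ x + m - 1)
    (hright : ∀ x, j + m - 1 < x → x ≤ n + m - 1 →
      ρ x = if σ (x - m + 1) < σ j then σ (x - m + 1) else σ (x - m + 1) + m - 1) :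
    InvSet (n + m - 1) ρ =
      {p | ∃ a b, (a, b) ∈ InvSet m τ ∧ p = (j - 1 + a, j - 1 + b)} ∪
      {p | ∃ x y, (x, y) ∈ InvSet n σ ∧ x ≠ j ∧ y ≠ j ∧ p = (sMap j m x, sMap j m y)} ∪
      {p | ∃ x t, (x, j) ∈ InvSet n σ ∧ 1 ≤ t ∧ t ≤ m ∧ p = (sMap j m x, j - 1 + t)} ∪
      {p | ∃ y t, (j, y) ∈ InvSet n σ ∧ 1 ≤ t ∧ t ≤ m ∧ p = (j - 1 + t, sMap j m y)} := by
  have hcj : 1 ≤ σ j ∧ σ j ≤ n := Set.mem_Icc.mp (hσ.mapsTo (Set.mem_Icc.mpr ⟨hj1, hjn⟩))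
  have hσr : ∀ x, 1 ≤ x → x ≤ n → 1 ≤ σ x ∧ σ x ≤ n :=
    fun x h1 h2 => Set.mem_Icc.mp (hσ.mapsTo (Set.mem_Icc.mpr ⟨h1, h2⟩))
  have hτr : ∀ t, 1 ≤ t → t ≤ m → 1 ≤ τ t ∧ τ t ≤ m :=
    fun t h1 h2 => Set.mem_Icc.mp (hτ.mapsTo (Set.mem_Icc.mpr ⟨h1, h2⟩))
  have hσne : ∀ x, 1 ≤ x → x ≤ n → x ≠ j → σ x ≠ σ j := by
    intro x h1 h2 hne h
    exact hne (hσ.injOn (Set.mem_Icc.mpr ⟨h1, h2⟩) (Set.mem_Icc.mpr ⟨hj1, hjn⟩) h)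
  have hc1 : 1 ≤ σ j := hcj.1
  have hL : ∀ a b : ℕ, a ≠ σ j → b ≠ σ j →
      ((if b < σ j then b else b + m - 1) < (if a < σ j then a else a + m - 1) ↔ b < a) := by
    intro a b ha hb; split_ifs <;> omega
  have hL2 : ∀ a t : ℕ, a ≠ σ j → 1 ≤ t → t ≤ m →
      ((σ j - 1 + t) < (if a < σ j then a else a + m - 1) ↔ σ j < a) := by
    intro a t ha h1 h2; split_ifs <;> omega
  have hL3 : ∀ a t : ℕ, a ≠ σ j → 1 ≤ t → t ≤ m →
      ((if a < σ j then a else a + m - 1) < σ j - 1 + t ↔ a < σ j) := by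
    intro a t ha h1 h2; split_ifs <;> omega
  ext ⟨u, v⟩
  simp only [InvSet, sMap, Set.mem_union, Set.mem_setOf_eq, Prod.mk.injEq]
  constructor
  · rintro ⟨hu1, huv, hvN, hρ⟩
    rcases (show u < j ∨ (j ≤ u ∧ u ≤ j + m - 1) ∨ j + m - 1 < u by omega) with hu | hu | hu <;>
      rcases (show v < j ∨ (j ≤ v ∧ v ≤ j + m - 1) ∨ j + m - 1 < v by omega) with hv | hv | hv
    -- left-left
    · rw [hleft u hu1 hu, hleft v (by omega) hv] at hρ
      have h := (hL (σ u) (σ v) (hσne u hu1 (by omega) (by omega))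
        (hσne v (by omega) (by omega) (by omega))).mp hρ
      refine Or.inl (Or.inl (Or.inr ⟨u, v, ⟨hu1, huv, by omega, h⟩, by omega, by omega,
        ?_, ?_⟩)) <;> split_ifs <;> omega
    -- left-mid
    · rw [hleft u hu1 hu, hmid v hv.1 hv.2] at hρ
      have htb := hτr (v - j + 1) (by omega) (by omega)
      have h := (hL2 (σ u) (τ (v - j + 1)) (hσne u hu1 (by omega) (by omega))
        htb.1 htb.2).mp hρ
      refine Or.inl (Or.inr ⟨u, v - j + 1, ⟨hu1, hu, hjn, h⟩, by omega, by omega,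
        ?_, by omega⟩)
      split_ifs <;> omega
    -- left-right
    · rw [hleft u hu1 hu, hright v hv hvN] at hρ
      have h := (hL (σ u) (σ (v - m + 1)) (hσne u hu1 (by omega) (by omega))
        (hσne (v - m + 1) (by omega) (by omega) (by omega))).mp hρ
      refine Or.inl (Or.inl (Or.inr ⟨u, v - m + 1, ⟨hu1, by omega, by omega, h⟩,
        by omega, by omega, ?_, ?_⟩)) <;> split_ifs <;> omega
    -- mid-left : impossible
    · omega
    -- mid-mid
    · rw [hmid u hu.1 hu.2, hmid v hv.1 hv.2] at hρ
      exact Or.inl (Or.inl (Or.inl ⟨u - j + 1, v - j + 1,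
        ⟨by omega, by omega, by omega, by omega⟩, by omega, by omega⟩))
    -- mid-right
    · rw [hmid u hu.1 hu.2, hright v hv hvN] at hρ
      have hta := hτr (u - j + 1) (by omega) (by omega)
      have h := (hL3 (σ (v - m + 1)) (τ (u - j + 1))
        (hσne (v - m + 1) (by omega) (by omega) (by omega)) hta.1 hta.2).mp hρ
      refine Or.inr ⟨v - m + 1, u - j + 1, ⟨hj1, by omega, by omega, h⟩, by omega, by omega,
        by omega, ?_⟩
      split_ifs <;> omega
    -- right-left, right-mid : impossible
    · omega
    · omega
    -- right-right
    · rw [hright u hu (by omega), hright v hv hvN] at hρ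
      have h := (hL (σ (u - m + 1)) (σ (v - m + 1))
        (hσne (u - m + 1) (by omega) (by omega) (by omega))
        (hσne (v - m + 1) (by omega) (by omega) (by omega))).mp hρ
      refine Or.inl (Or.inl (Or.inr ⟨u - m + 1, v - m + 1,
        ⟨by omega, by omega, by omega, h⟩, by omega, by omega, ?_, ?_⟩)) <;>
        split_ifs <;> omega
  · rintro (((⟨a, b, ⟨ha1, hab, hbm, hτab⟩, hu, hv⟩ |
        ⟨x, y, ⟨hx1, hxy, hyn, hσxy⟩, hxj, hyj, hu, hv⟩) |
        ⟨x, t, ⟨hx1, hxj, _, hσx⟩, ht1, htm, hu, hv⟩) |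
        ⟨y, t, ⟨_, hjy, hyn, hσy⟩, ht1, htm, hu, hv⟩)
    -- set A : mid-mid
    · subst hu hv
      refine ⟨by omega, by omega, by omega, ?_⟩
      rw [hmid _ (by omega) (by omega), hmid _ (by omega) (by omega),
        show j - 1 + a - j + 1 = a by omega, show j - 1 + b - j + 1 = b by omega]
      omega
    -- set B
    · subst hu hv
      refine ⟨by split_ifs <;> omega, by split_ifs <;> omega, by split_ifs <;> omega, ?_⟩
      rcases (show x < j ∨ j < x by omega) with hx | hx <;>
        rcases (show y < j ∨ j < y by omega) with hy | hy
      · rw [if_pos hx, if_pos hy, hleft x hx1 hx, hleft y (by omega) hy]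
        exact (hL (σ x) (σ y) (hσne x hx1 (by omega) hxj) (hσne y (by omega) hyn hyj)).mpr hσxy
      · rw [if_pos hx, if_neg (by omega), hright (y + m - 1) (by omega) (by omega),
          hleft x hx1 hx, show y + m - 1 - m + 1 = y by omega]
        exact (hL (σ x) (σ y) (hσne x hx1 (by omega) hxj) (hσne y (by omega) hyn hyj)).mpr hσxy
      · omega
      · rw [if_neg (by omega), if_neg (by omega), hright (x + m - 1) (by omega) (by omega),
          hright (y + m - 1) (by omega) (by omega), show x + m - 1 - m + 1 = x by omega,
          show y + m - 1 - m + 1 = y by omega]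
        exact (hL (σ x) (σ y) (hσne x hx1 (by omega) hxj) (hσne y (by omega) hyn hyj)).mpr hσxy
    -- set C
    · subst hu hv
      refine ⟨by split_ifs <;> omega, by split_ifs <;> omega, by omega, ?_⟩
      have htb := hτr t ht1 htm
      rw [if_pos hxj, hleft x hx1 hxj, hmid _ (by omega) (by omega),
        show j - 1 + t - j + 1 = t by omega]
      exact (hL2 (σ x) (τ t) (hσne x hx1 (by omega) (by omega)) htb.1 htb.2).mpr hσx
    -- set D
    · subst hu hv
      refine ⟨by omega, by split_ifs <;> omega, by split_ifs <;> omega, ?_⟩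
      have htb := hτr t ht1 htm
      rw [if_neg (by omega), hright (y + m - 1) (by omega) (by omega),
        hmid _ (by omega) (by omega), show y + m - 1 - m + 1 = y by omega,
        show j - 1 + t - j + 1 = t by omega]
      exact (hL3 (σ y) (τ t) (hσne y (by omega) hyn (by omega)) htb.1 htb.2).mpr hσy
end

section
/- Compatibility of the small Bruhat operad with the higher Bruhat order: fix d ≥ 1 and let O(n) = Z(nd, d+1). If b_0, b′_0 ∈ O(n) with b_0 ⊆ b′_0 and b_i, b′_i ∈ O(m_i) with b_i ⊆ b′_i for i = 1, …, n, then the operad compositions satisfy γ(b_0; b_1,…,b_n) ⊆ γ(b′_0; b′_1,…,b′_n), where γ(b_0; b_1,…,b_n) = ( ⋯ ((b_0 ∘_0 b_1) ∘_{d m_1} b_2) ⋯ ) ∘_{d(m_1+⋯+m_{n−1})} b_n (here inclusion of inversion sets corresponds to the domination order on higher Bruhat orders). -/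
/-- Iterated insertion: starting from `cur`, a set of `(d+1)`-subsets of `[N]`, insert the
members of the list `bs = [(m₁,b₁), …]` successively, `bᵢ` being a set of `(d+1)`-subsets
of `[mᵢ·d]`, the first insertion at position `ofs`, the next one at position `ofs + m₁·d`,
and so on. -/
def smallGo (d : ℕ) : Set (Finset ℕ) → ℕ → ℕ → List (ℕ × Set (Finset ℕ)) → Set (Finset ℕ)
  | cur, _, _, [] => cur
  | cur, N, ofs, (m, b) :: rest =>
      smallGo d (insSet d N (m * d) ofs cur b) (N + m * d - d) (ofs + m * d) rest

/-- The composition of the small Bruhat operad `HB₀^d`, `HB₀^d(n) = Z(nd, d+1)`: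
`γ(b₀; b₁,…,bₙ) = ( ⋯ ((b₀ ∘₀ b₁) ∘_{d·m₁} b₂) ⋯ ) ∘_{d(m₁+⋯+m_{n−1})} bₙ`. -/
def smallComp (d n : ℕ) (b0 : Set (Finset ℕ)) (bs : List (ℕ × Set (Finset ℕ))) :
    Set (Finset ℕ) :=
  smallGo d b0 (n * d) 0 bs

/-- An element of `HB₀^d(n) = Z(nd, d+1)`: a consistent set of `(d+1)`-subsets of `[nd]`. -/
def IsSmallElt (d n : ℕ) (b : Set (Finset ℕ)) : Prop :=
  IsGrassFamily (n * d) d b ∧ IsConsistent (n * d) d b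

lemma insSet_mono (d n m j : ℕ) {I1 I2 I1' I2' : Set (Finset ℕ)}
    (h : I1 ⊆ I2) (h' : I1' ⊆ I2') : insSet d n m j I1 I1' ⊆ insSet d n m j I2 I2' := by
  intro L hL
  obtain ⟨h1, h2, h3⟩ := hL
  refine ⟨h1, h2, ?_⟩
  rcases h3 with ⟨a, b⟩ | ⟨a, b⟩ | ⟨a, b, c⟩
  · exact Or.inl ⟨a, h' b⟩
  · exact Or.inr (Or.inl ⟨a, h b⟩)
  · exact Or.inr (Or.inr ⟨a, b, h c⟩)

lemma smallGo_mono (d : ℕ) (bs bs' : List (ℕ × Set (Finset ℕ)))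
    (hdom : List.Forall₂ (fun (p q : ℕ × Set (Finset ℕ)) => p.1 = q.1 ∧ p.2 ⊆ q.2) bs bs') :
    ∀ (cur cur' : Set (Finset ℕ)) (N ofs : ℕ), cur ⊆ cur' →
      smallGo d cur N ofs bs ⊆ smallGo d cur' N ofs bs' := by
  induction hdom with
  | nil => intro cur cur' N ofs h; exact h
  | @cons p q _ _ hpq _ ih =>
      intro cur cur' N ofs h
      obtain ⟨he, hs⟩ := hpq
      obtain ⟨m, b⟩ := p
      obtain ⟨m', b'⟩ := q
      simp only at he; subst he
      exact ih _ _ _ _ (insSet_mono d N (m * d) ofs h hs)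

/-- Compatibility of the small Bruhat operad with the higher Bruhat order: if `b₀ ⊆ b′₀`
and `bᵢ ⊆ b′ᵢ` (inclusion of inversion sets, i.e. domination of higher Bruhat orders),
then `γ(b₀; b₁,…,bₙ) ⊆ γ(b′₀; b′₁,…,b′ₙ)`. -/
theorem small_bruhat_operad_monotone (d : ℕ) (hd : 1 ≤ d)
    (n : ℕ) (hn : 1 ≤ n) (b0 b0' : Set (Finset ℕ))
    (bs bs' : List (ℕ × Set (Finset ℕ)))
    (hlen : bs.length = n) (hlen' : bs'.length = n)
    (hb0 : IsSmallElt d n b0) (hb0' : IsSmallElt d n b0')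
    (hbs : ∀ p ∈ bs, 1 ≤ p.1 ∧ IsSmallElt d p.1 p.2)
    (hbs' : ∀ p ∈ bs', 1 ≤ p.1 ∧ IsSmallElt d p.1 p.2)
    (h0 : b0 ⊆ b0')
    (hdom : List.Forall₂ (fun (p q : ℕ × Set (Finset ℕ)) => p.1 = q.1 ∧ p.2 ⊆ q.2) bs bs') :
    smallComp d n b0 bs ⊆ smallComp d n b0' bs' := by
  exact smallGo_mono d bs bs' hdom b0 b0' (n * d) 0 h0
end
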